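/- arXiv:2404.16755 — 7 statements merged into one kernel-verified Lean document; each statement's English description precedes it below -/
import Mathlib

section
/- For any permutation π of {1,...,n}, Spearman's footrule D(π) = Σᵢ |π(i) - i| is at most twice the number of inversions: D(π) ≤ 2·I(π), where I(π) = #{(i,j) : i < j and π(i) > π(j)}. -/
open Equiv Finset

/-- Spearman's footrule: total displacement of a permutation. -/
def dispD {n : ℕ} (π : Equiv.Perm (Fin n)) : ℕ :=
  ∑ i : Fin n, (((π i).val : ℤ) - (i.val : ℤ)).natAbs

/-- Inversion count of a permutation. -/
def invI {n : ℕ} (π : Equiv.Perm (Fin n)) : ℕ :=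
  (Finset.univ.filter fun p : Fin n × Fin n => p.1 < p.2 ∧ π p.2 < π p.1).card

/-- Number of cycles (orbits) of a permutation, counting fixed points. -/
def cyc {n : ℕ} (π : Equiv.Perm (Fin n)) : ℕ :=
  π.cycleType.card + (Finset.univ.filter fun i => π i = i).card

/-- Direct sum of permutations. -/
def permSum {m₁ m₂ : ℕ} (σ : Equiv.Perm (Fin m₁)) (τ : Equiv.Perm (Fin m₂)) :
    Equiv.Perm (Fin (m₁ + m₂)) :=
  finSumFinEquiv.permCongr (Equiv.sumCongr σ τ)

/-- The statistic x(π) = D(π) - I(π) - |π|. -/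
def xStat {n : ℕ} (π : Equiv.Perm (Fin n)) : ℤ :=
  (dispD π : ℤ) - (invI π : ℤ) - (n : ℤ)


lemma card_filter_lt_pi {n : ℕ} (π : Equiv.Perm (Fin n)) (i : Fin n) :
    (univ.filter fun j => π j < π i).card = (π i).val := by
  have h : (univ.filter fun j => π j < π i).card
      = (univ.filter fun k => k < π i).card := by
    apply Finset.card_equiv π
    intro j; simp
  rw [h]
  have : (univ.filter fun k => k < π i) = Finset.Iio (π i) := by
    ext k; simp
  rw [this, Fin.card_Iio]

lemma sub_le_cardA {n : ℕ} (π : Equiv.Perm (Fin n)) (i : Fin n) :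
    (π i).val - i.val ≤ (univ.filter fun j => i < j ∧ π j < π i).card := by
  have hS := card_filter_lt_pi π i
  have hsub : (univ.filter fun j => π j < π i)
      ⊆ (univ.filter fun j => i < j ∧ π j < π i) ∪ Finset.Iio i := by
    intro j hj
    simp only [mem_filter, mem_univ, true_and] at hj
    simp only [mem_union, mem_filter, mem_univ, true_and, Finset.mem_Iio]
    rcases lt_trichotomy i j with h|h|h
    · exact Or.inl ⟨h, hj⟩
    · subst h; exact absurd hj (lt_irrefl _)
    · exact Or.inr h
  have h1 := Finset.card_le_card hsub
  have h2 := Finset.card_union_le (univ.filter fun j => i < j ∧ π j < π i) (Finset.Iio i)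
  have h3 : (Finset.Iio i).card = i.val := by rw [Fin.card_Iio]
  omega

theorem Equiv.Perm.inv_apply_self {α : Type*} (f : Equiv.Perm α) (x : α) : f⁻¹ (f x) = x :=
  f.symm_apply_apply x

lemma sub_le_cardB {n : ℕ} (π : Equiv.Perm (Fin n)) (i : Fin n) :
    i.val - (π i).val ≤ (univ.filter fun j => j < i ∧ π i < π j).card := by
  have h := sub_le_cardA π⁻¹ (π i)
  rw [Equiv.Perm.inv_apply_self] at h
  have he : (univ.filter fun j => π i < j ∧ π⁻¹ j < i).card
      = (univ.filter fun j => j < i ∧ π i < π j).card := by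
    apply Finset.card_equiv π.symm
    intro j
    simp only [mem_filter, mem_univ, true_and, Equiv.Perm.inv_apply_self]
    constructor
    · rintro ⟨h1, h2⟩
      refine ⟨h2, ?_⟩
      simpa using h1
    · rintro ⟨h1, h2⟩
      refine ⟨by simpa using h2, h1⟩
  omega

lemma sum_cardA {n : ℕ} (π : Equiv.Perm (Fin n)) :
    ∑ i : Fin n, (univ.filter fun j => i < j ∧ π j < π i).card
      = (Finset.univ.filter fun p : Fin n × Fin n => p.1 < p.2 ∧ π p.2 < π p.1).card := by
  rw [Finset.card_eq_sum_card_fiberwise (f := Prod.fst) (t := univ) (fun x _ => mem_univ _)]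
  apply Finset.sum_congr rfl
  intro i _
  apply Finset.card_bij' (fun j _ => (i, j)) (fun p _ => p.2)
  · intro j hj
    simp only [mem_filter, mem_univ, true_and] at hj ⊢
    simp [hj]
  · intro p hp
    simp only [mem_filter, mem_univ, true_and] at hp ⊢
    obtain ⟨⟨h1, h2⟩, h3⟩ := hp
    subst h3
    exact ⟨h1, h2⟩
  · intros; rfl
  · intro p hp
    simp only [mem_filter, mem_univ, true_and] at hp
    obtain ⟨_, h3⟩ := hp
    subst h3; rfl

lemma sum_cardB {n : ℕ} (π : Equiv.Perm (Fin n)) :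
    ∑ i : Fin n, (univ.filter fun j => j < i ∧ π i < π j).card
      = (Finset.univ.filter fun p : Fin n × Fin n => p.1 < p.2 ∧ π p.2 < π p.1).card := by
  rw [Finset.card_eq_sum_card_fiberwise (f := Prod.snd) (t := univ) (fun x _ => mem_univ _)]
  apply Finset.sum_congr rfl
  intro i _
  apply Finset.card_bij' (fun j _ => (j, i)) (fun p _ => p.1)
  · intro j hj
    simp only [mem_filter, mem_univ, true_and] at hj ⊢
    simp [hj]
  · intro p hp
    simp only [mem_filter, mem_univ, true_and] at hp ⊢
    obtain ⟨⟨h1, h2⟩, h3⟩ := hp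
    subst h3
    exact ⟨h1, h2⟩
  · intros; rfl
  · intro p hp
    simp only [mem_filter, mem_univ, true_and] at hp
    obtain ⟨_, h3⟩ := hp
    subst h3; rfl

theorem diaconis_graham_upper (n : ℕ) (π : Equiv.Perm (Fin n)) :
    dispD π ≤ 2 * invI π := by
  have key : ∀ i : Fin n, (((π i).val : ℤ) - (i.val : ℤ)).natAbs
      ≤ (univ.filter fun j => i < j ∧ π j < π i).card
        + (univ.filter fun j => j < i ∧ π i < π j).card := by
    intro i
    have h1 := sub_le_cardA π i
    have h2 := sub_le_cardB π i
    omega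
  calc dispD π ≤ ∑ i : Fin n, ((univ.filter fun j => i < j ∧ π j < π i).card
        + (univ.filter fun j => j < i ∧ π i < π j).card) :=
        Finset.sum_le_sum fun i _ => key i
    _ = invI π + invI π := by
        rw [Finset.sum_add_distrib, sum_cardA, sum_cardB]; rfl
    _ = 2 * invI π := by omega
end

section
/- For any permutation π of {1,...,n}, equality D(π) = 2·I(π) holds if and only if π contains no occurrence of the pattern 321, i.e., there are no indices i < j < k with π(i) > π(j) > π(k). -/
open Equiv Finset

namespace DG321

/-- Containing the pattern 321. -/
def Has321 {n : ℕ} (π : Equiv.Perm (Fin n)) : Prop :=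
  ∃ i j k : Fin n, i < j ∧ j < k ∧ π k < π j ∧ π j < π i

variable {n : ℕ}

lemma swap_lt {t t1 i j : Fin n} (ht : t.val + 1 = t1.val) (hij : i < j)
    (hne : ¬(i = t ∧ j = t1)) : Equiv.swap t t1 i < Equiv.swap t t1 j := by
  have hij' : i.val < j.val := hij
  have hne' : ¬(i.val = t.val ∧ j.val = t1.val) := by
    rintro ⟨h1, h2⟩; exact hne ⟨Fin.ext h1, Fin.ext h2⟩
  rw [Equiv.swap_apply_def, Equiv.swap_apply_def, Fin.lt_def]
  simp only [Fin.ext_iff]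
  split_ifs <;> omega

lemma invI_swap {π : Equiv.Perm (Fin n)} {t t1 : Fin n} (ht : t.val + 1 = t1.val)
    (hd : π t1 < π t) : invI π = invI (π * Equiv.swap t t1) + 1 := by
  set s := Equiv.swap t t1 with hs
  have hss : ∀ x : Fin n, s (s x) = x := fun x => Equiv.swap_apply_self t t1 x
  have hst : s t = t1 := Equiv.swap_apply_left t t1
  have hst1 : s t1 = t := Equiv.swap_apply_right t t1
  have htt1 : t < t1 := by rw [Fin.lt_def]; omega
  set A := Finset.univ.filter fun p : Fin n × Fin n => p.1 < p.2 ∧ π p.2 < π p.1 with hA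
  set A' := Finset.univ.filter
    fun p : Fin n × Fin n => p.1 < p.2 ∧ (π * s) p.2 < (π * s) p.1 with hA'
  have hmem : (t, t1) ∈ A := by
    simp only [hA, mem_filter, mem_univ, true_and]
    exact ⟨htt1, hd⟩
  have key : A'.card = (A.erase (t, t1)).card := by
    apply Finset.card_nbij' (fun p => (s p.1, s p.2)) (fun p => (s p.1, s p.2))
    · intro p hp
      simp only [hA', mem_coe, mem_filter, mem_univ, true_and] at hp
      obtain ⟨h1, h2⟩ := hp
      have hne : ¬(p.1 = t ∧ p.2 = t1) := by
        rintro ⟨e1, e2⟩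
        rw [e1, e2] at h2
        simp only [Equiv.Perm.mul_apply, hst, hst1] at h2
        exact absurd h2 (not_lt.2 hd.le)
      simp only [Equiv.Perm.mul_apply] at h2
      refine Finset.mem_erase.2 ⟨?_, ?_⟩
      · intro he
        have e1 : s p.1 = t := congrArg Prod.fst he
        have e2 : s p.2 = t1 := congrArg Prod.snd he
        rw [← hss p.1, ← hss p.2, e1, e2, hst, hst1] at h1
        exact absurd h1 (not_lt.2 htt1.le)
      · simp only [hA, mem_filter, mem_univ, true_and]
        exact ⟨swap_lt ht h1 hne, h2⟩
    · intro p hp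
      rw [Finset.mem_coe, Finset.mem_erase] at hp
      obtain ⟨hne0, hp⟩ := hp
      simp only [hA, mem_filter, mem_univ, true_and] at hp
      obtain ⟨h1, h2⟩ := hp
      have hne : ¬(p.1 = t ∧ p.2 = t1) := by
        rintro ⟨e1, e2⟩
        exact hne0 (Prod.ext e1 e2)
      simp only [hA', mem_coe, mem_filter, mem_univ, true_and]
      refine ⟨swap_lt ht h1 hne, ?_⟩
      simp only [Equiv.Perm.mul_apply, hss]
      exact h2
    · intro p _; simp [hss]
    · intro p _; simp [hss]
  have h1 : invI π = A.card := rfl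
  have h2 : invI (π * s) = A'.card := rfl
  have hpos : 0 < A.card := Finset.card_pos.2 ⟨_, hmem⟩
  rw [h1, h2, key, Finset.card_erase_of_mem hmem]
  omega

lemma dispD_swap {π : Equiv.Perm (Fin n)} {t t1 : Fin n} (ht : t.val + 1 = t1.val)
    (hd : π t1 < π t) :
    dispD π = dispD (π * Equiv.swap t t1) +
      (if (π t1).val ≤ t.val ∧ t.val < (π t).val then 2 else 0) := by
  set s := Equiv.swap t t1 with hs
  have htne : t ≠ t1 := by
    intro h; rw [h] at ht; omega
  have hst : s t = t1 := Equiv.swap_apply_left t t1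
  have hst1 : s t1 = t := Equiv.swap_apply_right t t1
  have expand : ∀ σ : Equiv.Perm (Fin n),
      dispD σ = (∑ i ∈ (univ.erase t1).erase t, (((σ i).val : ℤ) - (i.val : ℤ)).natAbs)
        + (((σ t).val : ℤ) - (t.val : ℤ)).natAbs
        + (((σ t1).val : ℤ) - (t1.val : ℤ)).natAbs := by
    intro σ
    rw [dispD, ← Finset.sum_erase_add univ _ (mem_univ t1),
      ← Finset.sum_erase_add (univ.erase t1) _ (Finset.mem_erase.2 ⟨htne, mem_univ t⟩)]
  rw [expand π, expand (π * s)]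
  have hsum : (∑ i ∈ (univ.erase t1).erase t, ((((π * s) i).val : ℤ) - (i.val : ℤ)).natAbs)
      = ∑ i ∈ (univ.erase t1).erase t, (((π i).val : ℤ) - (i.val : ℤ)).natAbs := by
    refine Finset.sum_congr rfl fun i hi => ?_
    rw [Finset.mem_erase] at hi
    obtain ⟨hi1, hi2⟩ := hi
    rw [Finset.mem_erase] at hi2
    rw [Equiv.Perm.mul_apply, hs, Equiv.swap_apply_of_ne_of_ne hi1 hi2.1]
  rw [hsum]
  have e1 : (π * s) t = π t1 := by rw [Equiv.Perm.mul_apply, hst]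
  have e2 : (π * s) t1 = π t := by rw [Equiv.Perm.mul_apply, hst1]
  rw [e1, e2]
  have hba : (π t1).val < (π t).val := hd
  split_ifs <;> omega

lemma descent_cond_of_no321 {π : Equiv.Perm (Fin n)} {t t1 : Fin n} (ht : t.val + 1 = t1.val)
    (hd : π t1 < π t) (h : ¬ Has321 π) : (π t1).val ≤ t.val ∧ t.val < (π t).val := by
  have htt1 : t < t1 := by rw [Fin.lt_def]; omega
  have inj : ∀ S : Finset (Fin n), Set.InjOn π S := fun S a _ b _ hab => π.injective hab
  constructor
  · by_contra hc
    push_neg at hc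
    have hw : ∃ k, t1 < k ∧ π k < π t1 := by
      by_contra hno
      push_neg at hno
      have hsub : ∀ i ∈ insert t (Ici t1), π i ∈ Ici (π t1) := by
        intro i hi
        rw [Finset.mem_insert, Finset.mem_Ici] at hi
        rw [Finset.mem_Ici]
        rcases hi with rfl | hi
        · exact hd.le
        · rcases eq_or_lt_of_le hi with rfl | hi
          · exact le_rfl
          · exact hno i hi
      have hcard := Finset.card_le_card_of_injOn π hsub (inj _)
      rw [Finset.card_insert_of_notMem (by
        rw [Finset.mem_Ici]; exact fun hle => absurd htt1 (not_lt.2 hle))] at hcard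
      rw [Fin.card_Ici, Fin.card_Ici] at hcard
      have h1 : t1.val < n := t1.isLt
      have h2 : (π t1).val < n := (π t1).isLt
      omega
    obtain ⟨k, hk, hpk⟩ := hw
    exact h ⟨t, t1, k, htt1, hk, hpk, hd⟩
  · by_contra hc
    push_neg at hc
    have hw : ∃ i, i < t ∧ π t < π i := by
      by_contra hno
      push_neg at hno
      have hsub : ∀ i ∈ insert t1 (Iic t), π i ∈ Iic (π t) := by
        intro i hi
        rw [Finset.mem_insert, Finset.mem_Iic] at hi
        rw [Finset.mem_Iic]
        rcases hi with rfl | hi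
        · exact hd.le
        · rcases eq_or_lt_of_le hi with rfl | hi
          · exact le_rfl
          · exact hno i hi
      have hcard := Finset.card_le_card_of_injOn π hsub (inj _)
      rw [Finset.card_insert_of_notMem (by
        rw [Finset.mem_Iic]; exact fun hle => absurd htt1 (not_lt.2 hle))] at hcard
      rw [Fin.card_Iic, Fin.card_Iic] at hcard
      omega
    obtain ⟨i, hi, hpi⟩ := hw
    exact h ⟨i, t, t1, hi, htt1, hd, hpi⟩

lemma has321_swap {π : Equiv.Perm (Fin n)} {t t1 : Fin n} (ht : t.val + 1 = t1.val)
    (hd : π t1 < π t) (hb : (π t1).val ≤ t.val) (ha : t.val < (π t).val)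
    (h : Has321 π) : Has321 (π * Equiv.swap t t1) := by
  obtain ⟨i, j, k, hij, hjk, h1, h2⟩ := h
  set s := Equiv.swap t t1 with hs
  have hst : s t = t1 := Equiv.swap_apply_left t t1
  have hst1 : s t1 = t := Equiv.swap_apply_right t t1
  have hss : ∀ x : Fin n, s (s x) = x := fun x => Equiv.swap_apply_self t t1 x
  have htt1 : t < t1 := by rw [Fin.lt_def]; omega
  have inj : ∀ S : Finset (Fin n), Set.InjOn π S := fun S a _ b _ hab => π.injective hab
  have hfix : ∀ x : Fin n, x ≠ t → x ≠ t1 → s x = x :=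
    fun x hx1 hx2 => Equiv.swap_apply_of_ne_of_ne hx1 hx2
  by_cases cij : i = t ∧ j = t1
  · -- pattern (t, t1, k) : find x < t with π t1 < π x
    obtain ⟨e1, e2⟩ := cij
    rw [e1] at hij h2
    rw [e2] at hjk h1 h2
    clear e1 e2 hij
    have hw : ∃ x, x < t ∧ π t1 < π x := by
      by_contra hno
      push_neg at hno
      have hsub : ∀ z ∈ insert k (insert t1 (Iio t)), π z ∈ Iic (π t1) := by
        intro z hz
        rw [Finset.mem_insert, Finset.mem_insert, Finset.mem_Iio] at hz
        rw [Finset.mem_Iic]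
        rcases hz with rfl | rfl | hz
        · exact h1.le
        · exact le_rfl
        · exact hno z hz
      have hcard := Finset.card_le_card_of_injOn π hsub (inj _)
      have hk1 : k ∉ insert t1 (Iio t) := by
        rw [Finset.mem_insert, Finset.mem_Iio]
        rintro (rfl | hk)
        · exact absurd hjk (lt_irrefl _)
        · exact absurd (htt1.trans hjk) (not_lt.2 hk.le)
      have hk2 : t1 ∉ Iio t := by
        rw [Finset.mem_Iio]; exact not_lt.2 htt1.le
      rw [Finset.card_insert_of_notMem hk1, Finset.card_insert_of_notMem hk2,
        Fin.card_Iio, Fin.card_Iic] at hcard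
      omega
    obtain ⟨x, hx, hpx⟩ := hw
    refine ⟨x, t, k, hx, htt1.trans hjk, ?_, ?_⟩
    · show (π * s) k < (π * s) t
      have hkt : k ≠ t := (htt1.trans hjk).ne'
      have hkt1 : k ≠ t1 := hjk.ne'
      simp only [Equiv.Perm.mul_apply, hst, hfix k hkt hkt1]
      exact h1
    · show (π * s) t < (π * s) x
      have hxt : x ≠ t := hx.ne
      have hxt1 : x ≠ t1 := (hx.trans htt1).ne
      simp only [Equiv.Perm.mul_apply, hst, hfix x hxt hxt1]
      exact hpx
  · by_cases cjk : j = t ∧ k = t1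
    · -- pattern (i, t, t1) : find z > t1 with π z < π t
      obtain ⟨e1, e2⟩ := cjk
      rw [e1] at hij h2 hjk
      rw [e2] at hjk h1
      clear e1 e2
      have hw : ∃ z, t1 < z ∧ π z < π t := by
        by_contra hno
        push_neg at hno
        have hsub : ∀ z ∈ insert i (insert t (Ioi t1)), π z ∈ Ici (π t) := by
          intro z hz
          rw [Finset.mem_insert, Finset.mem_insert, Finset.mem_Ioi] at hz
          rw [Finset.mem_Ici]
          rcases hz with rfl | rfl | hz
          · exact h2.le
          · exact le_rfl
          · exact hno z hz
        have hcard := Finset.card_le_card_of_injOn π hsub (inj _)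
        have hi1 : i ∉ insert t (Ioi t1) := by
          rw [Finset.mem_insert, Finset.mem_Ioi]
          rintro (rfl | hi)
          · exact absurd hij (lt_irrefl _)
          · exact absurd (hij.trans htt1) (not_lt.2 hi.le)
        have hi2 : t ∉ Ioi t1 := by
          rw [Finset.mem_Ioi]; exact not_lt.2 htt1.le
        rw [Finset.card_insert_of_notMem hi1, Finset.card_insert_of_notMem hi2,
          Fin.card_Ioi, Fin.card_Ici] at hcard
        have h3 : t1.val < n := t1.isLt
        have h4 : (π t).val < n := (π t).isLt
        omega
      obtain ⟨z, hz, hpz⟩ := hw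
      refine ⟨i, t1, z, hij.trans htt1, hz, ?_, ?_⟩
      · show (π * s) z < (π * s) t1
        have hzt : z ≠ t := (htt1.trans hz).ne'
        have hzt1 : z ≠ t1 := hz.ne'
        simp only [Equiv.Perm.mul_apply, hst1, hfix z hzt hzt1]
        exact hpz
      · show (π * s) t1 < (π * s) i
        have hit : i ≠ t := hij.ne
        have hit1 : i ≠ t1 := (hij.trans htt1).ne
        simp only [Equiv.Perm.mul_apply, hst1, hfix i hit hit1]
        exact h2
    · refine ⟨s i, s j, s k, swap_lt ht hij cij, swap_lt ht hjk cjk, ?_, ?_⟩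
      · show (π * s) (s k) < (π * s) (s j)
        simp only [Equiv.Perm.mul_apply, hss]
        exact h1
      · show (π * s) (s j) < (π * s) (s i)
        simp only [Equiv.Perm.mul_apply, hss]
        exact h2

lemma strictMono_of_no_descent {π : Equiv.Perm (Fin n)}
    (h : ∀ t t1 : Fin n, t.val + 1 = t1.val → ¬ π t1 < π t) : StrictMono π := by
  cases n with
  | zero => intro a; exact a.elim0
  | succ m =>
    rw [Fin.strictMono_iff_lt_succ]
    intro i
    have hv : (Fin.castSucc i).val + 1 = (i.succ).val := by simp
    have h1 := h (Fin.castSucc i) i.succ hv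
    have hne : π (Fin.castSucc i) ≠ π i.succ := by
      intro he
      have := π.injective he
      exact absurd this (Fin.castSucc_lt_succ (i := i)).ne
    exact lt_of_le_of_ne (not_lt.1 h1) hne

lemma exists_descent {π : Equiv.Perm (Fin n)} (h : invI π ≠ 0) :
    ∃ t t1 : Fin n, t.val + 1 = t1.val ∧ π t1 < π t := by
  by_contra hno
  push_neg at hno
  have hm := strictMono_of_no_descent fun t t1 ht => not_lt.2 (hno t t1 ht)
  apply h
  rw [invI, Finset.card_eq_zero, Finset.filter_eq_empty_iff]
  rintro p - ⟨h1, h2⟩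
  exact absurd (hm h1) (not_lt.2 h2.le)

lemma eq_id_of_strictMono {π : Equiv.Perm (Fin n)} (hm : StrictMono π) : ∀ i, π i = i := by
  intro i
  let e := StrictMono.orderIsoOfSurjective π hm π.surjective
  have he : e = OrderIso.refl (Fin n) := Subsingleton.elim _ _
  have h2 : e i = i := by rw [he]; rfl
  rwa [show e i = π i from rfl] at h2

lemma zero_case {π : Equiv.Perm (Fin n)} (h : invI π = 0) :
    dispD π = 0 ∧ ¬ Has321 π := by
  have hemp : ∀ p : Fin n × Fin n, ¬(p.1 < p.2 ∧ π p.2 < π p.1) := by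
    rw [invI, Finset.card_eq_zero, Finset.filter_eq_empty_iff] at h
    exact fun p hp => h (Finset.mem_univ p) hp
  have hm : StrictMono π := strictMono_of_no_descent fun t t1 ht hlt =>
    hemp (t, t1) ⟨show t < t1 by rw [Fin.lt_def]; omega, hlt⟩
  have hid := eq_id_of_strictMono hm
  constructor
  · rw [dispD]
    apply Finset.sum_eq_zero
    intro i _
    rw [hid i]
    simp
  · rintro ⟨i, j, k, hij, hjk, h1, h2⟩
    exact hemp (i, j) ⟨hij, h2⟩

/-- Swapping an adjacent descent cannot create a 321 pattern. -/
lemma has321_of_swap {π : Equiv.Perm (Fin n)} {t t1 : Fin n} (ht : t.val + 1 = t1.val)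
    (hd : π t1 < π t) (h : Has321 (π * Equiv.swap t t1)) : Has321 π := by
  obtain ⟨i, j, k, hij, hjk, h1, h2⟩ := h
  have hij' : ¬(i = t ∧ j = t1) := by
    rintro ⟨rfl, rfl⟩
    simp [Equiv.Perm.mul_apply, Equiv.swap_apply_left, Equiv.swap_apply_right] at h2
    exact absurd h2 (not_lt.2 hd.le)
  have hjk' : ¬(j = t ∧ k = t1) := by
    rintro ⟨rfl, rfl⟩
    simp [Equiv.Perm.mul_apply, Equiv.swap_apply_left, Equiv.swap_apply_right] at h1
    exact absurd h1 (not_lt.2 hd.le)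
  exact ⟨_, _, _, swap_lt ht hij hij', swap_lt ht hjk hjk', h1, h2⟩

lemma main (N : ℕ) : ∀ (π : Equiv.Perm (Fin n)), invI π ≤ N →
    dispD π ≤ 2 * invI π ∧ (dispD π = 2 * invI π ↔ ¬ Has321 π) := by
  induction N with
  | zero =>
    intro π hπ
    have h0 : invI π = 0 := Nat.le_zero.1 hπ
    obtain ⟨hD, hH⟩ := zero_case h0
    rw [hD, h0]
    exact ⟨le_rfl, by simp [hH]⟩
  | succ N ih =>
    intro π hπ
    by_cases h0 : invI π = 0
    · obtain ⟨hD, hH⟩ := zero_case h0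
      rw [hD, h0]
      exact ⟨le_rfl, by simp [hH]⟩
    · obtain ⟨t, t1, ht, hd⟩ := exists_descent h0
      have hinv := invI_swap ht hd
      have hdisp := dispD_swap ht hd
      have hle : invI (π * Equiv.swap t t1) ≤ N := by omega
      obtain ⟨ih1, ih2⟩ := ih _ hle
      by_cases hc : (π t1).val ≤ t.val ∧ t.val < (π t).val
      · rw [if_pos hc] at hdisp
        refine ⟨by omega, ?_, ?_⟩
        · intro he
          have heq : dispD (π * Equiv.swap t t1) = 2 * invI (π * Equiv.swap t t1) := by omega
          have hno' := ih2.1 heq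
          exact fun hH => hno' (has321_swap ht hd hc.1 hc.2 hH)
        · intro hH
          have hno' : ¬ Has321 (π * Equiv.swap t t1) :=
            fun hH' => hH (has321_of_swap ht hd hH')
          have := ih2.2 hno'
          omega
      · rw [if_neg hc] at hdisp
        have hH : Has321 π := by
          by_contra hno
          exact hc (descent_cond_of_no321 ht hd hno)
        refine ⟨by omega, ?_, ?_⟩
        · intro he
          exfalso
          omega
        · intro hno
          exact absurd hH hno

end DG321

theorem dispD_eq_two_mul_invI_iff_no_321 (n : ℕ) (π : Equiv.Perm (Fin n)) :
    dispD π = 2 * invI π ↔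
      ¬ ∃ i j k : Fin n, i < j ∧ j < k ∧ π k < π j ∧ π j < π i :=
  (DG321.main (invI π) π le_rfl).2
end

section
/- For any permutation π of {1,...,n}, I(π) + T(π) ≤ D(π), where T(π) = n − cyc(π) is the minimum number of transpositions whose product is π (cyc(π) is the number of cycles of π, counting fixed points). -/
open Equiv Finset

lemma cyc_eq {n : ℕ} (π : Equiv.Perm (Fin n)) :
    cyc π = π.cycleType.card + (n - π.support.card) := by
  have h : (Finset.univ.filter fun i => π i = i) = univ \ π.support := by
    ext i; simp [Equiv.Perm.mem_support]
  rw [cyc, h, Finset.card_sdiff_of_subset (Finset.subset_univ _), Finset.card_univ, Fintype.card_fin]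

lemma cyc_step {n : ℕ} (π : Equiv.Perm (Fin n)) (k m : Fin n) (hkm : k ≠ m) (hπk : π k = m) :
    cyc (π * Equiv.swap k m) = cyc π + 1 := by
  classical
  have hk : π k ≠ k := by rw [hπk]; exact hkm.symm
  have hks : k ∈ π.support := Equiv.Perm.mem_support.2 hk
  set c := π.cycleOf k with hc
  have hc_mem : c ∈ π.cycleFactorsFinset := Equiv.Perm.cycleOf_mem_cycleFactorsFinset_iff.2 hks
  have hcyc : c.IsCycle := Equiv.Perm.isCycle_cycleOf π hk
  have hck : c k = m := by rw [hc, Equiv.Perm.cycleOf_apply_self, hπk]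
  have hd : Equiv.Perm.Disjoint (π * c⁻¹) c :=
    Equiv.Perm.disjoint_mul_inv_of_mem_cycleFactorsFinset hc_mem
  set d := π * c⁻¹ with hdd
  have hdc : d * c = π := inv_mul_cancel_right π c
  have hπm : π m ≠ m := fun h => hkm (π.injective (hπk.trans h.symm))
  have hcm : c m = π m := by
    rw [hc, Equiv.Perm.cycleOf_apply]
    rw [if_pos]; exact ⟨1, by simpa using hπk⟩
  have hcmm : c m ≠ m := by rw [hcm]; exact hπm
  have hms : m ∈ c.support := Equiv.Perm.mem_support.2 hcmm
  have hsupp : π.support = d.support ∪ c.support := by rw [← hdc]; exact hd.support_mul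
  have hdisj : _root_.Disjoint d.support c.support := hd.disjoint_support
  have hcard : π.support.card = d.support.card + c.support.card := by
    rw [hsupp, Finset.card_union_of_disjoint hdisj]
  have htype : π.cycleType = d.cycleType + c.cycleType := by rw [← hdc]; exact hd.cycleType_mul
  have hctype : c.cycleType = {c.support.card} := hcyc.cycleType
  have hn : π.support.card ≤ n := by
    simpa using Finset.card_le_univ π.support
  by_cases hcm2 : c m = k
  · -- c is the transposition (k m)
    have hcs : c = Equiv.swap k m := by
      have h2 : c (c k) = k := by rw [hck]; exact hcm2
      have := hcyc.eq_swap_of_apply_apply_eq_self (x := k) (by rw [hck]; exact hkm.symm) h2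
      rwa [hck] at this
    have hred : π * Equiv.swap k m = d := by
      rw [← hdc, mul_assoc, ← hcs]
      rw [hcs, Equiv.swap_mul_self, mul_one]
    rw [hred, cyc_eq, cyc_eq, htype, hctype]
    have hsc : c.support.card = 2 := by rw [hcs]; exact Equiv.Perm.card_support_swap hkm
    rw [hcard, hsc]
    simp only [Multiset.card_add, Multiset.card_singleton]
    omega
  · -- c has length ≥ 3
    have h2 : c (c m) ≠ m := fun h => hcm2 (c.injective (h.trans hck.symm))
    set c' := Equiv.swap m (c m) * c with hc'
    have hc'cyc : c'.IsCycle := hcyc.swap_mul hcmm h2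
    have hc'supp : c'.support = c.support \ {m} := Equiv.Perm.support_swap_mul_eq c m h2
    have hc'card : c'.support.card = c.support.card - 1 := by
      rw [hc'supp, Finset.sdiff_singleton_eq_erase, Finset.card_erase_of_mem hms]
    have hfac : π * Equiv.swap k m = d * c' := by
      rw [← hdc, mul_assoc]
      congr 1
      rw [hc', ← hck, ← Equiv.mul_swap_eq_swap_mul]
    have hd' : Equiv.Perm.Disjoint d c' := by
      intro x
      rcases hd x with h | h
      · exact Or.inl h
      · right
        have : x ∉ c.support := Equiv.Perm.notMem_support.2 h
        have : x ∉ c'.support := fun hx =>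
          this (by rw [hc'supp] at hx; exact (Finset.mem_sdiff.1 hx).1)
        exact Equiv.Perm.notMem_support.1 this
    have hA : Multiset.card ((d * c').cycleType) = Multiset.card π.cycleType := by
      rw [htype, hd'.cycleType_mul, hc'cyc.cycleType, hctype]
      simp
    have hB : (d * c').support.card + 1 = π.support.card := by
      rw [hd'.support_mul, Finset.card_union_of_disjoint hd'.disjoint_support, hc'card, hcard]
      have hms1 : 1 ≤ c.support.card := Finset.card_pos.2 ⟨m, hms⟩
      omega
    rw [hfac, cyc_eq, cyc_eq]
    omega

lemma lt_of_max' {n : ℕ} (π : Equiv.Perm (Fin n)) (m : Fin n)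
    (hmax : ∀ j, m < j → π j = j) :
    ∀ a : Fin n, a ≤ m → π a ≠ m → π a < m := by
  intro a ham hne
  by_contra h
  push_neg at h
  have h2 : m < π a := lt_of_le_of_ne h (Ne.symm hne)
  have h4 : π a = a := π.injective (hmax _ h2)
  rw [h4] at h2
  exact absurd ham (not_le.2 h2)

lemma s_bound1 {n : ℕ} (π : Equiv.Perm (Fin n)) (k m : Fin n) (hkm : k < m) :
    (univ.filter fun j => k < j ∧ j < m ∧ π m < π j).card + k.val + 1 ≤ m.val := by
  have h : (univ.filter fun j => k < j ∧ j < m ∧ π m < π j).card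
      ≤ (Finset.Ioo k.val m.val).card := by
    apply Finset.card_le_card_of_injOn (fun j => j.val)
    · intro j hj
      simp only [Finset.coe_filter, Set.mem_setOf_eq] at hj
      simp only [Finset.coe_Ioo, Set.mem_Ioo]
      exact ⟨hj.2.1, hj.2.2.1⟩
    · intro a _ b _ hab
      exact Fin.val_injective hab
  rw [Nat.card_Ioo] at h
  have := hkm
  rw [Fin.lt_iff_val_lt_val] at this
  omega

lemma s_bound2 {n : ℕ} (π : Equiv.Perm (Fin n)) (k m : Fin n) (hkm : k < m) (hπk : π k = m)
    (hmax : ∀ j, m < j → π j = j) :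
    (univ.filter fun j => k < j ∧ j < m ∧ π m < π j).card + (π m).val + 1 ≤ m.val := by
  have hπm : π m < m := by
    apply lt_of_max' π m hmax m le_rfl
    intro h
    exact absurd (π.injective (hπk.trans h.symm)) (ne_of_lt hkm)
  have h : (univ.filter fun j => k < j ∧ j < m ∧ π m < π j).card
      ≤ (Finset.Ioo (π m).val m.val).card := by
    apply Finset.card_le_card_of_injOn (fun j => (π j).val)
    · intro j hj
      simp only [Finset.coe_filter, Set.mem_setOf_eq] at hj
      simp only [Finset.coe_Ioo, Set.mem_Ioo]
      refine ⟨hj.2.2.2, ?_⟩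
      have : π j < m := by
        apply lt_of_max' π m hmax j (le_of_lt hj.2.2.1)
        intro h
        exact absurd (π.injective (h.trans hπk.symm)) (ne_of_gt hj.2.1)
      exact this
    · intro a _ b _ hab
      exact π.injective (Fin.val_injective hab)
  rw [Nat.card_Ioo] at h
  omega

lemma dispD_step {n : ℕ} (π : Equiv.Perm (Fin n)) (k m : Fin n) (hkm : k < m) (hπk : π k = m)
    (hmax : ∀ j, m < j → π j = j) :
    dispD (π * Equiv.swap k m) + 2 + 2 * (univ.filter fun j => k < j ∧ j < m ∧ π m < π j).card
      ≤ dispD π := by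
  set π' := π * Equiv.swap k m with hπ'
  have hkm' : k ≠ m := ne_of_lt hkm
  have hπ'k : π' k = π m := by rw [hπ', Equiv.Perm.mul_apply, Equiv.swap_apply_left]
  have hπ'm : π' m = m := by rw [hπ', Equiv.Perm.mul_apply, Equiv.swap_apply_right, hπk]
  have hπ'o : ∀ x : Fin n, x ≠ k → x ≠ m → π' x = π x := by
    intro x h1 h2
    rw [hπ', Equiv.Perm.mul_apply, Equiv.swap_apply_of_ne_of_ne h1 h2]
  have hπm : π m < m := by
    apply lt_of_max' π m hmax m le_rfl
    intro h
    exact absurd (π.injective (hπk.trans h.symm)) hkm'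
  have hkm2 : k ∈ (univ : Finset (Fin n)).erase m := Finset.mem_erase.2 ⟨hkm', mem_univ k⟩
  have e1 : dispD π = (∑ i ∈ ((univ : Finset (Fin n)).erase m).erase k,
      (((π i).val : ℤ) - (i.val : ℤ)).natAbs)
      + (((π k).val : ℤ) - (k.val : ℤ)).natAbs + (((π m).val : ℤ) - (m.val : ℤ)).natAbs := by
    rw [dispD, ← Finset.sum_erase_add univ _ (mem_univ m), ← Finset.sum_erase_add _ _ hkm2]
  have e2 : dispD π' = (∑ i ∈ ((univ : Finset (Fin n)).erase m).erase k,
      (((π i).val : ℤ) - (i.val : ℤ)).natAbs)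
      + (((π m).val : ℤ) - (k.val : ℤ)).natAbs := by
    rw [dispD, ← Finset.sum_erase_add univ _ (mem_univ m), ← Finset.sum_erase_add _ _ hkm2]
    rw [hπ'k, hπ'm]
    simp only [sub_self, Int.natAbs_zero, add_zero]
    congr 1
    apply Finset.sum_congr rfl
    intro i hi
    rw [hπ'o i (Finset.mem_erase.1 hi).1 (Finset.mem_erase.1 (Finset.mem_erase.1 hi).2).1]
  have hb1 := s_bound1 π k m hkm
  have hb2 := s_bound2 π k m hkm hπk hmax
  have hklt : k.val < m.val := hkm
  have hplt : (π m).val < m.val := hπm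
  rw [e1, e2, hπk]
  omega

lemma invI_step {n : ℕ} (π : Equiv.Perm (Fin n)) (k m : Fin n) (hkm : k < m) (hπk : π k = m)
    (hmax : ∀ j, m < j → π j = j) :
    invI π ≤ invI (π * Equiv.swap k m) + 1
      + 2 * (univ.filter fun j => k < j ∧ j < m ∧ π m < π j).card := by
  classical
  set π' := π * Equiv.swap k m with hπ'
  have hkm' : k ≠ m := ne_of_lt hkm
  have hπ'k : π' k = π m := by rw [hπ', Equiv.Perm.mul_apply, Equiv.swap_apply_left]
  have hπ'm : π' m = m := by rw [hπ', Equiv.Perm.mul_apply, Equiv.swap_apply_right, hπk]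
  have hπ'o : ∀ x : Fin n, x ≠ k → x ≠ m → π' x = π x := by
    intro x h1 h2
    rw [hπ', Equiv.Perm.mul_apply, Equiv.swap_apply_of_ne_of_ne h1 h2]
  have fact1 : ∀ a : Fin n, a < m → a ≠ k → π a < m := by
    intro a ham hak
    apply lt_of_max' π m hmax a (le_of_lt ham)
    intro h
    exact hak (π.injective (h.trans hπk.symm))
  have fact2 : π m < m := by
    apply lt_of_max' π m hmax m le_rfl
    intro h
    exact absurd (π.injective (hπk.trans h.symm)) hkm'
  set S := univ.filter (fun j => k < j ∧ j < m ∧ π m < π j) with hS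
  set A := univ.filter (fun p : Fin n × Fin n => p.1 < p.2 ∧ π p.2 < π p.1) with hA
  set B := univ.filter (fun p : Fin n × Fin n => p.1 < p.2 ∧ π' p.2 < π' p.1) with hB
  set E := (({(k, m)} : Finset (Fin n × Fin n)) ∪ S.image (fun j => (k, j)))
      ∪ S.image (fun j => (j, m)) with hE
  have memB : ∀ p : Fin n × Fin n, p.1 < p.2 → π' p.2 < π' p.1 → p ∈ B := by
    intro p h1 h2
    rw [hB, mem_filter]
    exact ⟨mem_univ _, h1, h2⟩
  have memS : ∀ j : Fin n, k < j → j < m → π m < π j → j ∈ S := by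
    intro j h1 h2 h3
    rw [hS, mem_filter]
    exact ⟨mem_univ _, h1, h2, h3⟩
  have noAk : ∀ a : Fin n, a < k → (a, k) ∉ A := by
    intro a hak hmem
    rw [hA, mem_filter] at hmem
    have hv : π k < π a := hmem.2.2
    rw [hπk] at hv
    exact absurd (fact1 a (hak.trans hkm) (ne_of_lt hak)) (not_lt.2 (le_of_lt hv))
  have key : A.card ≤ (B ∪ E).card := by
    apply Finset.card_le_card_of_injOn
      (fun p => if p.2 = m ∧ p.1 < k then (p.1, k) else p)
    · rintro ⟨a, b⟩ hp
      have hp' := hp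
      rw [Finset.mem_coe] at hp hp' ⊢
      rw [hA, mem_filter] at hp'
      obtain ⟨-, hab, hv⟩ := hp'
      simp only at hab hv ⊢
      by_cases hbm : b = m
      · subst hbm
        by_cases hak : a < k
        · rw [if_pos ⟨rfl, hak⟩]
          apply mem_union_left
          apply memB (a, k) hak
          simp only
          rw [hπ'k, hπ'o a (ne_of_lt hak) (ne_of_lt (hak.trans hkm))]
          exact hv
        · rw [if_neg (by simp [hak])]
          apply mem_union_right
          rcases eq_or_lt_of_le (not_lt.1 hak) with heq | hlt
          · rw [hE]
            apply mem_union_left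
            apply mem_union_left
            simp [← heq]
          · rw [hE]
            apply mem_union_right
            apply mem_image_of_mem
            exact memS a hlt hab hv
      · have hblt : b < m := by
          rcases lt_trichotomy b m with h | h | h
          · exact h
          · exact absurd h hbm
          · exfalso
            have hb : π b = b := hmax b h
            rcases lt_trichotomy a m with ha | ha | ha
            · by_cases hak : a = k
              · rw [hak, hπk, hb] at hv
                exact absurd (h.trans hv) (lt_irrefl _)
              · have := fact1 a ha hak
                rw [hb] at hv
                exact absurd ((h.trans hv).trans this) (lt_irrefl _)
            · subst ha
              rw [hb] at hv
              exact absurd ((h.trans hv).trans fact2) (lt_irrefl _)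
            · have ha' : π a = a := hmax a ha
              rw [hb, ha'] at hv
              exact absurd (hv.trans hab) (lt_irrefl _)
        rw [if_neg (by simp [hbm])]
        have hbk : b ≠ k := by
          intro h
          subst h
          exact noAk a hab hp
        have ham : a < m := hab.trans hblt
        by_cases hak : a = k
        · subst hak
          by_cases hbv : π b < π m
          · apply mem_union_left
            apply memB (a, b) hab
            simp only
            rw [hπ'k, hπ'o b hbk hbm]
            exact hbv
          · apply mem_union_right
            rw [hE]
            apply mem_union_left
            apply mem_union_right
            apply mem_image_of_mem
            have : π m < π b := by
              rcases lt_trichotomy (π m) (π b) with h | h | h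
              · exact h
              · exact absurd (π.injective h.symm) hbm
              · exact absurd h hbv
            exact memS b hab hblt this
        · apply mem_union_left
          apply memB (a, b) hab
          simp only
          rw [hπ'o b hbk hbm, hπ'o a hak (ne_of_lt ham)]
          exact hv
    · rintro ⟨a, b⟩ hp ⟨a', b'⟩ hq hf
      dsimp only at hf
      by_cases h1 : b = m ∧ a < k <;> by_cases h2 : b' = m ∧ a' < k
      · rw [if_pos h1, if_pos h2] at hf
        have hfa : a = a' := congrArg Prod.fst hf
        rw [Prod.ext_iff]
        exact ⟨hfa, h1.1.trans h2.1.symm⟩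
      · rw [if_pos h1, if_neg h2] at hf
        exfalso
        have : (a', b') = (a, k) := hf.symm
        rw [this] at hq
        exact noAk a h1.2 (Finset.mem_coe.1 hq)
      · rw [if_neg h1, if_pos h2] at hf
        exfalso
        have : (a, b) = (a', k) := hf
        rw [this] at hp
        exact noAk a' h2.2 (Finset.mem_coe.1 hp)
      · rw [if_neg h1, if_neg h2] at hf
        exact hf
  have hBcard : (B ∪ E).card ≤ B.card + (1 + S.card + S.card) := by
    calc (B ∪ E).card ≤ B.card + E.card := Finset.card_union_le _ _
    _ ≤ B.card + (1 + S.card + S.card) := by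
        apply Nat.add_le_add_left
        rw [hE]
        calc ((({(k, m)} : Finset (Fin n × Fin n)) ∪ S.image (fun j => (k, j)))
              ∪ S.image (fun j => (j, m))).card
            ≤ (({(k, m)} : Finset (Fin n × Fin n)) ∪ S.image (fun j => (k, j))).card
              + (S.image (fun j => (j, m))).card := Finset.card_union_le _ _
          _ ≤ (({(k, m)} : Finset (Fin n × Fin n)).card + (S.image (fun j => (k, j))).card)
              + (S.image (fun j => (j, m))).card := by
              exact Nat.add_le_add_right (Finset.card_union_le _ _) _
          _ ≤ 1 + S.card + S.card := by
              have h1 := Finset.card_image_le (s := S) (f := fun j => (k, j))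
              have h2 := Finset.card_image_le (s := S) (f := fun j => (j, m))
              simp only [Finset.card_singleton]
              omega
  have hIA : invI π = A.card := rfl
  have hIB : invI π' = B.card := rfl
  omega

lemma invI_one {n : ℕ} : invI (1 : Equiv.Perm (Fin n)) = 0 := by
  rw [invI, Finset.card_eq_zero]
  apply Finset.filter_false_of_mem
  rintro p - ⟨h1, h2⟩
  simp only [Equiv.Perm.one_apply] at h2
  exact absurd h2 (asymm h1)

lemma cyc_one {n : ℕ} : cyc (1 : Equiv.Perm (Fin n)) = n := by
  rw [cyc, Equiv.Perm.cycleType_one]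
  simp

lemma dg_aux : ∀ (N n : ℕ) (π : Equiv.Perm (Fin n)),
    dispD π ≤ N → invI π + (n - cyc π) ≤ dispD π := by
  intro N
  induction N with
  | zero =>
    intro n π h
    have hπ : π = 1 := by
      ext i
      simp only [Equiv.Perm.one_apply]
      have h0 : dispD π = 0 := Nat.le_zero.1 h
      rw [dispD] at h0
      have := (Finset.sum_eq_zero_iff.1 h0) i (mem_univ i)
      have := Int.natAbs_eq_zero.1 this
      omega
    subst hπ
    rw [invI_one, cyc_one]
    simp
  | succ N ih =>
    intro n π h
    by_cases hπ : π = 1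
    · subst hπ
      rw [invI_one, cyc_one]
      simp
    · have hne : (univ.filter fun i => π i ≠ i).Nonempty := by
        by_contra hc
        rw [Finset.not_nonempty_iff_eq_empty, Finset.filter_eq_empty_iff] at hc
        apply hπ
        ext i
        have := hc (mem_univ i)
        simp only [ne_eq, not_not] at this
        simp [this]
      set m := (univ.filter fun i => π i ≠ i).max' hne with hm
      have hmm : π m ≠ m := (Finset.mem_filter.1 ((univ.filter fun i => π i ≠ i).max'_mem hne)).2
      have hmax : ∀ j, m < j → π j = j := by
        intro j hj
        by_contra hc
        exact absurd (Finset.le_max' _ j (Finset.mem_filter.2 ⟨mem_univ _, hc⟩)) (not_le.2 hj)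
      set k := π⁻¹ m with hk
      have hπk : π k = m := π.apply_symm_apply m
      have hkm' : k ≠ m := by
        intro h
        rw [h] at hπk
        exact hmm hπk
      have hkm : k < m := by
        rcases lt_or_gt_of_ne hkm' with h | h
        · exact h
        · exact absurd (hπk.symm.trans (hmax k h)) (Ne.symm hkm')
      have hc := cyc_step π k m hkm' hπk
      have hi := invI_step π k m hkm hπk hmax
      have hdisp := dispD_step π k m hkm hπk hmax
      have hd' : dispD (π * Equiv.swap k m) ≤ N := by omega
      have hih := ih n (π * Equiv.swap k m) hd'
      omega

theorem diaconis_graham_lower (n : ℕ) (π : Equiv.Perm (Fin n)) :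
    invI π + (n - cyc π) ≤ dispD π := by
  exact dg_aux (dispD π) n π le_rfl
end

section
/- Let π ∈ Sₙ and let σ ∈ Sₙ be the n-cycle with σ(i) = i+1 for i < n and σ(n) = 1. Then the conjugate π' = σπσ⁻¹ satisfies D(π') − I(π') = D(π) − I(π), i.e., x(π') = x(π) where x(π) = D(π) − I(π) − n. -/
open Equiv Finset

lemma rot_val {m : ℕ} (x : Fin (m+1)) :
    ((finRotate (m+1)) x).val = if x.val = m then 0 else x.val + 1 := by
  rcases eq_or_ne x (Fin.last m) with h | h
  · subst h; simp [finRotate_last]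
  · have hv : x.val ≠ m := fun hv => h (Fin.ext (by simpa using hv))
    rw [finRotate_succ_apply, Fin.val_add_one, if_neg h, if_neg hv]

lemma card_filter_comp_perm {n : ℕ} (π : Equiv.Perm (Fin n)) (p : Fin n → Prop) [DecidablePred p] :
    (univ.filter fun i => p (π i)).card = (univ.filter p).card := by
  apply Finset.card_bij' (fun a _ => π a) (fun a _ => π⁻¹ a) <;> simp

lemma card_gt {m : ℕ} (a : Fin (m+1)) :
    (univ.filter fun j => a < j).card = m - a.val := by
  have h : (univ.filter fun j => a < j) = Finset.Ioi a := by ext x; simp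
  rw [h, Fin.card_Ioi]; omega

lemma card_lt {m : ℕ} (b : Fin (m+1)) :
    (univ.filter fun j => j < b).card = b.val := by
  have h : (univ.filter fun j => j < b) = Finset.Iio b := by ext x; simp
  rw [h, Fin.card_Iio]

set_option maxHeartbeats 2000000 in
set_option maxRecDepth 10000 in
lemma key (m : ℕ) (π : Equiv.Perm (Fin (m+1))) :
    (dispD (finRotate (m+1) * π * (finRotate (m+1))⁻¹) : ℤ)
        - (invI (finRotate (m+1) * π * (finRotate (m+1))⁻¹) : ℤ)
      = (dispD π : ℤ) - (invI π : ℤ) := by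
  have hconj : ∀ j, (finRotate (m+1) * π * (finRotate (m+1))⁻¹) (finRotate (m+1) j)
      = finRotate (m+1) (π j) := by
    intro j; simp only [Equiv.Perm.mul_apply, Equiv.Perm.inv_def, Equiv.symm_apply_apply]
  have hIgen : ∀ (τ : Equiv.Perm (Fin (m+1))), (invI τ : ℤ)
      = ∑ p : Fin (m+1) × Fin (m+1), (if p.1 < p.2 ∧ τ p.2 < τ p.1 then (1:ℤ) else 0) := by
    intro τ; rw [invI, Finset.sum_boole]
  have hD : (dispD (finRotate (m+1) * π * (finRotate (m+1))⁻¹) : ℤ)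
      = ∑ j : Fin (m+1),
          ((((finRotate (m+1) (π j)).val : ℤ) - ((finRotate (m+1) j).val : ℤ)).natAbs : ℤ) := by
    rw [dispD, Nat.cast_sum]
    rw [← Equiv.sum_comp (finRotate (m+1))
      (fun i : Fin (m+1) => (((((finRotate (m+1) * π * (finRotate (m+1))⁻¹) i).val : ℤ)
        - (i.val : ℤ)).natAbs : ℤ))]
    exact Finset.sum_congr rfl fun j _ => by rw [hconj]
  have hI : ((invI (finRotate (m+1) * π * (finRotate (m+1))⁻¹)) : ℤ)
      = ∑ p : Fin (m+1) × Fin (m+1),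
          (if finRotate (m+1) p.1 < finRotate (m+1) p.2
              ∧ finRotate (m+1) (π p.2) < finRotate (m+1) (π p.1) then (1:ℤ) else 0) := by
    rw [hIgen]
    rw [← Equiv.sum_comp ((finRotate (m+1)).prodCongr (finRotate (m+1)))
      (fun p : Fin (m+1) × Fin (m+1) =>
        (if p.1 < p.2 ∧ (finRotate (m+1) * π * (finRotate (m+1))⁻¹) p.2
            < (finRotate (m+1) * π * (finRotate (m+1))⁻¹) p.1 then (1:ℤ) else 0))]
    refine Finset.sum_congr rfl fun p _ => ?_
    simp only [Equiv.prodCongr_apply, Prod.map, hconj]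
  have hDπ : (dispD π : ℤ)
      = ∑ j : Fin (m+1), ((((π j).val : ℤ) - (j.val : ℤ)).natAbs : ℤ) := by
    rw [dispD, Nat.cast_sum]
  rw [hD, hI, hDπ, hIgen π]
  rw [← sub_eq_zero]
  have hrearr : ∀ (A B C D : ℤ), A - B - (C - D) = (A - C) - (B - D) := by intros; ring
  rw [hrearr, sub_eq_zero, ← Finset.sum_sub_distrib, ← Finset.sum_sub_distrib]
  by_cases hfix : π (Fin.last m) = Fin.last m
  · -- fixed case: termwise zero on both sides
    have hiff : ∀ x : Fin (m+1), (π x).val = m ↔ x.val = m := by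
      intro x
      constructor
      · intro hx
        have h1 : π x = π (Fin.last m) := by
          rw [hfix]; exact Fin.ext (by simpa using hx)
        have := π.injective h1
        simp [this]
      · intro hx
        have : x = Fin.last m := Fin.ext (by simpa using hx)
        simp [this, hfix]
    rw [Finset.sum_eq_zero, Finset.sum_eq_zero]
    · intro p _
      have h1 := rot_val p.1
      have h2 := rot_val p.2
      have h3 := rot_val (π p.1)
      have h4 := rot_val (π p.2)
      have e1 := hiff p.1
      have e2 := hiff p.2
      have b1 : p.1.val ≤ m := Fin.is_le p.1
      have b2 : p.2.val ≤ m := Fin.is_le p.2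
      have b3 : (π p.1).val ≤ m := Fin.is_le _
      have b4 : (π p.2).val ≤ m := Fin.is_le _
      have hc : (finRotate (m+1) p.1 < finRotate (m+1) p.2
          ∧ finRotate (m+1) (π p.2) < finRotate (m+1) (π p.1))
          ↔ (p.1 < p.2 ∧ π p.2 < π p.1) := by
        simp only [Fin.lt_def, h1, h2, h3, h4]
        split_ifs <;> omega
      rw [if_congr hc rfl rfl, sub_self]
    · intro j _
      have h1 := rot_val (π j)
      have h2 := rot_val j
      have e1 := hiff j
      have b1 : j.val ≤ m := Fin.is_le j
      have b2 : (π j).val ≤ m := Fin.is_le _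
      rw [h1, h2]
      split_ifs <;> omega
  · -- moving case
    have hπa : π (π⁻¹ (Fin.last m)) = Fin.last m := π.apply_symm_apply _
    set a := π⁻¹ (Fin.last m) with hadef
    set b := π (Fin.last m) with hbdef
    have ha : a ≠ Fin.last m := fun h => hfix ((congrArg π h).symm.trans hπa)
    have hb : b ≠ Fin.last m := hfix
    have haval : a.val < m := Fin.val_lt_last ha
    have hbval : b.val < m := Fin.val_lt_last hb
    have hπav : (π a).val = m := by rw [hπa]; simp
    have hπlv : (π (Fin.last m)).val = b.val := by rw [← hbdef]
    have hlastv : (Fin.last m).val = m := rfl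
    have hlink : ∀ x : Fin (m+1), ((π x).val = m ↔ x.val = a.val) := by
      intro x
      constructor
      · intro hx
        have h1 : π x = π a := by rw [hπa]; exact Fin.ext (by simpa using hx)
        rw [π.injective h1]
      · intro hx
        have hxa : x = a := Fin.ext hx
        rw [hxa, hπa]; simp
    have hlink2 : ∀ x : Fin (m+1), ((π x).val = b.val ↔ x.val = m) := by
      intro x
      constructor
      · intro hx
        have h1 : π x = π (Fin.last m) := by rw [← hbdef]; exact Fin.ext hx
        rw [π.injective h1]
        simp
      · intro hx
        have hxl : x = Fin.last m := Fin.ext (by simpa using hx)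
        rw [hxl]
    set Gf : Fin (m+1) → Fin (m+1) → ℤ := fun x y =>
      (if (if x.val = m then 0 else x.val+1) < (if y.val = m then 0 else y.val+1)
          ∧ (if (π y).val = m then 0 else (π y).val+1) < (if (π x).val = m then 0 else (π x).val+1)
        then (1:ℤ) else 0)
      - (if x.val < y.val ∧ (π y).val < (π x).val then (1:ℤ) else 0) with hGf
    have hGsum : ∑ p : Fin (m+1) × Fin (m+1),
        ((if finRotate (m+1) p.1 < finRotate (m+1) p.2
            ∧ finRotate (m+1) (π p.2) < finRotate (m+1) (π p.1) then (1:ℤ) else 0)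
          - (if p.1 < p.2 ∧ π p.2 < π p.1 then (1:ℤ) else 0))
        = ∑ p : Fin (m+1) × Fin (m+1), Gf p.1 p.2 := by
      refine Finset.sum_congr rfl fun p _ => ?_
      rw [hGf]
      refine congrArg₂ (· - ·) ?_ ?_
      · exact if_congr (by rw [Fin.lt_def, Fin.lt_def, rot_val, rot_val, rot_val, rot_val]) rfl rfl
      · exact if_congr (by rw [Fin.lt_def, Fin.lt_def]) rfl rfl
    have hL : (∑ j : Fin (m+1),
        (((((finRotate (m+1) (π j)).val : ℤ) - ((finRotate (m+1) j).val : ℤ)).natAbs : ℤ)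
          - ((((π j).val : ℤ) - (j.val : ℤ)).natAbs : ℤ)))
        = 2*(a.val:ℤ) + 2*(b.val:ℤ) + 2 - 2*(m:ℤ) := by
      have hzero : ∀ j ∈ (univ : Finset (Fin (m+1))),
          j ∉ ({a, Fin.last m} : Finset (Fin (m+1))) →
          (((((finRotate (m+1) (π j)).val : ℤ) - ((finRotate (m+1) j).val : ℤ)).natAbs : ℤ)
            - ((((π j).val : ℤ) - (j.val : ℤ)).natAbs : ℤ)) = 0 := by
        intro j _ hj
        simp only [Finset.mem_insert, Finset.mem_singleton, not_or] at hj
        have h2 : j.val ≠ m := fun h => hj.2 (Fin.ext (by simpa using h))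
        have h1 : (π j).val ≠ m := fun h => hj.1 (Fin.ext ((hlink j).mp h))
        rw [rot_val, rot_val, if_neg h1, if_neg h2]
        have b1 : j.val ≤ m := Fin.is_le j
        have b2 : (π j).val ≤ m := Fin.is_le _
        omega
      rw [← Finset.sum_subset (Finset.subset_univ _) hzero, Finset.sum_pair ha]
      rw [rot_val (π a), rot_val a, rot_val (π (Fin.last m)), rot_val (Fin.last m),
        hπav, hπlv, hlastv]
      split_ifs <;> omega
    have hR : (∑ p : Fin (m+1) × Fin (m+1), Gf p.1 p.2)
        = 2*(a.val:ℤ) + 2*(b.val:ℤ) + 2 - 2*(m:ℤ) := by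
      set S : Finset (Fin (m+1)) := {a, Fin.last m} with hS
      have hzero : ∀ p ∈ (univ : Finset (Fin (m+1) × Fin (m+1))),
          p ∉ S ×ˢ (univ : Finset (Fin (m+1))) ∪ (univ : Finset (Fin (m+1))) ×ˢ S →
          Gf p.1 p.2 = 0 := by
        intro p _ hp
        simp only [hS, Finset.mem_union, Finset.mem_product, Finset.mem_univ, and_true, true_and,
          not_or, Finset.mem_insert, Finset.mem_singleton] at hp
        obtain ⟨⟨h1a, h1l⟩, h2a, h2l⟩ := hp
        have e1 : p.1.val ≠ m := fun h => h1l (Fin.ext (by simpa using h))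
        have e2 : p.2.val ≠ m := fun h => h2l (Fin.ext (by simpa using h))
        have e3 : (π p.1).val ≠ m := fun h => h1a (Fin.ext ((hlink p.1).mp h))
        have e4 : (π p.2).val ≠ m := fun h => h2a (Fin.ext ((hlink p.2).mp h))
        simp only [hGf]
        rw [if_neg e1, if_neg e2, if_neg e3, if_neg e4]
        split_ifs <;> omega
      rw [← Finset.sum_subset (Finset.subset_univ _) hzero]
      have hint : (S ×ˢ (univ : Finset (Fin (m+1)))) ∩ ((univ : Finset (Fin (m+1))) ×ˢ S)
          = S ×ˢ S := by
        ext p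
        simp only [Finset.mem_inter, Finset.mem_product, Finset.mem_univ, and_true, true_and]
      have hsplit : (∑ p ∈ S ×ˢ (univ : Finset (Fin (m+1)))
            ∪ (univ : Finset (Fin (m+1))) ×ˢ S, Gf p.1 p.2)
          = (∑ p ∈ S ×ˢ (univ : Finset (Fin (m+1))), Gf p.1 p.2)
            + (∑ p ∈ (univ : Finset (Fin (m+1))) ×ˢ S, Gf p.1 p.2)
            - (∑ p ∈ S ×ˢ S, Gf p.1 p.2) := by
        rw [← Finset.sum_union_inter, hint]; ring
      rw [hsplit]
      -- row sums
      have hrowa : ∑ j : Fin (m+1), Gf a j = -((m : ℤ) - (a.val : ℤ)) := by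
        have hterm : ∀ j : Fin (m+1), Gf a j = -(if a.val < j.val then (1:ℤ) else 0) := by
          intro j
          simp only [hGf]
          have l1 := hlink j
          have l2 := hlink2 j
          have b1 : j.val ≤ m := Fin.is_le j
          have b2 : (π j).val ≤ m := Fin.is_le _
          rw [hπav]
          split_ifs <;> omega
        calc ∑ j : Fin (m+1), Gf a j
            = ∑ j : Fin (m+1), -(if a.val < j.val then (1:ℤ) else 0) :=
              Finset.sum_congr rfl fun j _ => hterm j
          _ = -∑ j : Fin (m+1), (if a.val < j.val then (1:ℤ) else 0) := by
              rw [Finset.sum_neg_distrib]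
          _ = -((univ.filter fun j : Fin (m+1) => a.val < j.val).card : ℤ) := by
              rw [Finset.sum_boole]
          _ = -((m : ℤ) - (a.val : ℤ)) := by
              have hfe : (univ.filter fun j : Fin (m+1) => a.val < j.val)
                  = univ.filter fun j => a < j := by
                ext x; simp only [Finset.mem_filter, Finset.mem_univ, true_and, Fin.lt_def]
              rw [hfe, card_gt]
              omega
      have hrowl : ∑ j : Fin (m+1), Gf (Fin.last m) j = (b.val : ℤ) + 1 := by
        have hterm : ∀ j : Fin (m+1),
            Gf (Fin.last m) j = (if j.val = a.val ∨ (π j).val < b.val then (1:ℤ) else 0) := by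
          intro j
          simp only [hGf]
          have l1 := hlink j
          have l2 := hlink2 j
          have b1 : j.val ≤ m := Fin.is_le j
          have b2 : (π j).val ≤ m := Fin.is_le _
          rw [hπlv, hlastv]
          split_ifs <;> omega
        calc ∑ j : Fin (m+1), Gf (Fin.last m) j
            = ∑ j : Fin (m+1), (if j.val = a.val ∨ (π j).val < b.val then (1:ℤ) else 0) :=
              Finset.sum_congr rfl fun j _ => hterm j
          _ = ((univ.filter fun j : Fin (m+1) => j.val = a.val ∨ (π j).val < b.val).card : ℤ) :=
              Finset.sum_boole _ _
          _ = (b.val : ℤ) + 1 := by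
              have hfe : (univ.filter fun j : Fin (m+1) => j.val = a.val ∨ (π j).val < b.val)
                  = insert a (univ.filter fun j => π j < b) := by
                ext x
                simp only [Finset.mem_filter, Finset.mem_univ, true_and, Finset.mem_insert,
                  Fin.val_eq_val, Fin.lt_def]
              rw [hfe, Finset.card_insert_of_notMem, card_filter_comp_perm π (fun v => v < b),
                card_lt]
              · push_cast; ring
              · simp only [Finset.mem_filter, Finset.mem_univ, true_and, hπa]
                exact Fin.not_lt.mpr (Fin.le_last b)
      -- column sums
      have hcola : ∑ i : Fin (m+1), Gf i a = (a.val : ℤ) + 1 := by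
        have hterm : ∀ i : Fin (m+1),
            Gf i a = (if i.val < a.val ∨ i.val = m then (1:ℤ) else 0) := by
          intro i
          simp only [hGf]
          have l1 := hlink i
          have l2 := hlink2 i
          have b1 : i.val ≤ m := Fin.is_le i
          have b2 : (π i).val ≤ m := Fin.is_le _
          rw [hπav]
          split_ifs <;> omega
        calc ∑ i : Fin (m+1), Gf i a
            = ∑ i : Fin (m+1), (if i.val < a.val ∨ i.val = m then (1:ℤ) else 0) :=
              Finset.sum_congr rfl fun i _ => hterm i
          _ = ((univ.filter fun i : Fin (m+1) => i.val < a.val ∨ i.val = m).card : ℤ) :=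
              Finset.sum_boole _ _
          _ = (a.val : ℤ) + 1 := by
              have hfe : (univ.filter fun i : Fin (m+1) => i.val < a.val ∨ i.val = m)
                  = insert (Fin.last m) (univ.filter fun i => i < a) := by
                ext x
                simp only [Finset.mem_filter, Finset.mem_univ, true_and, Finset.mem_insert,
                  Fin.lt_def, Fin.ext_iff, Fin.val_last]
                constructor
                · rintro (h | h)
                  · exact Or.inr h
                  · exact Or.inl h
                · rintro (h | h)
                  · exact Or.inr h
                  · exact Or.inl h
              rw [hfe, Finset.card_insert_of_notMem, card_lt]
              · push_cast; ring
              · simp only [Finset.mem_filter, Finset.mem_univ, true_and]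
                exact Fin.not_lt.mpr (Fin.le_last a)
      have hcoll : ∑ i : Fin (m+1), Gf i (Fin.last m) = -((m : ℤ) - (b.val : ℤ)) := by
        have hterm : ∀ i : Fin (m+1),
            Gf i (Fin.last m) = -(if b.val < (π i).val then (1:ℤ) else 0) := by
          intro i
          simp only [hGf]
          have l1 := hlink i
          have l2 := hlink2 i
          have b1 : i.val ≤ m := Fin.is_le i
          have b2 : (π i).val ≤ m := Fin.is_le _
          rw [hπlv, hlastv]
          split_ifs <;> omega
        calc ∑ i : Fin (m+1), Gf i (Fin.last m)
            = ∑ i : Fin (m+1), -(if b.val < (π i).val then (1:ℤ) else 0) :=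
              Finset.sum_congr rfl fun i _ => hterm i
          _ = -∑ i : Fin (m+1), (if b.val < (π i).val then (1:ℤ) else 0) := by
              rw [Finset.sum_neg_distrib]
          _ = -((univ.filter fun i : Fin (m+1) => b.val < (π i).val).card : ℤ) := by
              rw [Finset.sum_boole]
          _ = -((m : ℤ) - (b.val : ℤ)) := by
              have hfe : (univ.filter fun i : Fin (m+1) => b.val < (π i).val)
                  = univ.filter fun i => b < π i := by
                ext x; simp only [Finset.mem_filter, Finset.mem_univ, true_and, Fin.lt_def]
              rw [hfe, card_filter_comp_perm π (fun v => b < v), card_gt]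
              omega
      have hSS : (∑ p ∈ S ×ˢ S, Gf p.1 p.2) = 0 := by
        rw [Finset.sum_product]
        simp only [hS, Finset.sum_pair ha]
        simp only [hGf]
        rw [hπav, hπlv, hlastv]
        have b1 : a.val ≤ m := Fin.is_le a
        have b2 : b.val ≤ m := Fin.is_le b
        split_ifs <;> omega
      have hP1 : (∑ p ∈ S ×ˢ (univ : Finset (Fin (m+1))), Gf p.1 p.2)
          = -((m : ℤ) - (a.val : ℤ)) + ((b.val : ℤ) + 1) := by
        rw [Finset.sum_product]
        rw [hS, Finset.sum_pair ha]
        show (∑ j : Fin (m+1), Gf a j) + (∑ j : Fin (m+1), Gf (Fin.last m) j) = _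
        rw [hrowa, hrowl]
      have hP2 : (∑ p ∈ (univ : Finset (Fin (m+1))) ×ˢ S, Gf p.1 p.2)
          = ((a.val : ℤ) + 1) + -((m : ℤ) - (b.val : ℤ)) := by
        rw [Finset.sum_product_right]
        rw [hS, Finset.sum_pair ha]
        show (∑ i : Fin (m+1), Gf i a) + (∑ i : Fin (m+1), Gf i (Fin.last m)) = _
        rw [hcola, hcoll]
      rw [hP1, hP2, hSS]
      ring
    rw [hGsum, hL, hR]

theorem xStat_conj_finRotate (n : ℕ) (π : Equiv.Perm (Fin n)) :
    (dispD (finRotate n * π * (finRotate n)⁻¹) : ℤ)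
        - (invI (finRotate n * π * (finRotate n)⁻¹) : ℤ)
      = (dispD π : ℤ) - (invI π : ℤ) ∧
    xStat (finRotate n * π * (finRotate n)⁻¹) = xStat π := by
  have h1 : (dispD (finRotate n * π * (finRotate n)⁻¹) : ℤ)
      - (invI (finRotate n * π * (finRotate n)⁻¹) : ℤ)
      = (dispD π : ℤ) - (invI π : ℤ) := by
    cases n with
    | zero => simp [dispD, invI]
    | succ m => exact key m π
  refine ⟨h1, ?_⟩
  unfold xStat
  rw [h1]
end

section
/- Let π ∈ Sₙ, let a be the index with π(a) = n and let b = π(n). If a ≠ n, then D(σπσ⁻¹) = D(π) + 2a + 2b − 2n, where σ is the cyclic shift i ↦ i+1 (mod n). If a = n, then D(σπσ⁻¹) = D(π). -/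
open Equiv Finset

theorem dispD_conj_finRotate (n : ℕ) (π : Equiv.Perm (Fin (n + 1)))
    (a b : Fin (n + 1)) (ha : π a = Fin.last n) (hb : π (Fin.last n) = b) :
    (a ≠ Fin.last n →
      (dispD (finRotate (n + 1) * π * (finRotate (n + 1))⁻¹) : ℤ)
        = (dispD π : ℤ) + 2 * ((a.val : ℤ) + 1) + 2 * ((b.val : ℤ) + 1)
            - 2 * ((n : ℤ) + 1)) ∧
    (a = Fin.last n →
      dispD (finRotate (n + 1) * π * (finRotate (n + 1))⁻¹) = dispD π) := by
  have key : dispD (finRotate (n+1) * π * (finRotate (n+1))⁻¹)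
      = ∑ i : Fin (n+1),
        ((((finRotate (n+1)) (π i)).val : ℤ) - (((finRotate (n+1)) i).val : ℤ)).natAbs := by
    unfold dispD
    rw [← Equiv.sum_comp (finRotate (n+1)) fun j : Fin (n+1) =>
      ((((finRotate (n+1) * π * (finRotate (n+1))⁻¹) j).val : ℤ) - (j.val : ℤ)).natAbs]
    apply Finset.sum_congr rfl
    intro i _
    simp only [Equiv.Perm.mul_apply, Equiv.Perm.inv_def, Equiv.symm_apply_apply]
  have hval : ∀ i : Fin (n+1),
      ((finRotate (n+1)) i).val = if i = Fin.last n then 0 else i.val + 1 := by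
    intro i
    rw [finRotate_succ_apply, Fin.val_add_one]
  have hle : ∀ i : Fin (n+1), i.val ≤ n := fun i => Nat.lt_succ_iff.mp i.isLt
  constructor
  · intro hane
    have hbne : b ≠ Fin.last n := by
      intro h
      apply hane
      apply π.injective
      rw [ha, hb, h]
    have hpoint : ∀ i : Fin (n+1),
        (((((finRotate (n+1)) (π i)).val : ℤ) - (((finRotate (n+1)) i).val : ℤ)).natAbs : ℤ)
        = ((((π i).val : ℤ) - (i.val : ℤ)).natAbs : ℤ)
          + ((if i = a then 2*(a.val:ℤ)+1-n else 0)
             + (if i = Fin.last n then 2*(b.val:ℤ)+1-n else 0)) := by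
      intro i
      rw [hval, hval]
      by_cases hia : i = a
      · subst hia
        rw [ha, if_neg hane, if_pos rfl, if_pos rfl, if_neg hane]
        have h1 := hle i
        have h2 : (Fin.last n).val = n := rfl
        have h3 : i.val ≠ n := fun h => hane (Fin.ext h)
        rw [h2]
        omega
      · by_cases hil : i = Fin.last n
        · subst hil
          rw [hb, if_neg hbne, if_pos rfl, if_neg hia, if_pos rfl]
          have h1 := hle b
          have h2 : (Fin.last n).val = n := rfl
          have h3 : b.val ≠ n := fun h => hbne (Fin.ext h)
          rw [h2]
          omega
        · have hpne : π i ≠ Fin.last n := by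
            intro h
            apply hia
            apply π.injective
            rw [h, ha]
          rw [if_neg hpne, if_neg hil, if_neg hia, if_neg hil]
          omega
    have hsum : (dispD (finRotate (n+1) * π * (finRotate (n+1))⁻¹) : ℤ)
        = ∑ i : Fin (n+1),
          (((((finRotate (n+1)) (π i)).val : ℤ) - (((finRotate (n+1)) i).val : ℤ)).natAbs : ℤ) := by
      rw [key]; push_cast; ring
    rw [hsum]
    rw [Finset.sum_congr rfl (fun i _ => hpoint i)]
    rw [Finset.sum_add_distrib, Finset.sum_add_distrib]
    rw [Finset.sum_ite_eq' Finset.univ a, Finset.sum_ite_eq' Finset.univ (Fin.last n)]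
    simp only [Finset.mem_univ, if_pos]
    have : (dispD π : ℤ) = ∑ i : Fin (n+1), ((((π i).val : ℤ) - (i.val : ℤ)).natAbs : ℤ) := by
      unfold dispD; push_cast; ring
    rw [← this]
    ring
  · intro hal
    subst hal
    rw [ha] at hb
    rw [key]
    unfold dispD
    apply Finset.sum_congr rfl
    intro i _
    by_cases hil : i = Fin.last n
    · subst hil
      rw [ha]
      simp
    · have hpne : π i ≠ Fin.last n := by
        intro h
        apply hil
        apply π.injective
        rw [h, ha]
      rw [hval, hval, if_neg hpne, if_neg hil]
      have := hle (π i)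
      have := hle i
      omega
end

section
/- For any permutation π of {1,...,n}, D(π) − I(π) − n + cyc(π) ≥ 0, with the quantity x(π) = D(π) − I(π) − n satisfying x(π) ≥ −cyc(π). -/
open Equiv Finset

/-- Extending a cycle by a fixed point via right multiplication by a swap. -/
lemma isCycle_mul_swap {α : Type*} [DecidableEq α] [Fintype α] (c : Equiv.Perm α)
    (hc : c.IsCycle) (i j : α) (hci : c i = i) (hcj : c j ≠ j) :
    Equiv.Perm.IsCycle (c * Equiv.swap i j) := by
  have hij : i ≠ j := fun h => hcj (h ▸ hci)
  set g := c * Equiv.swap i j with hg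
  have hgi : g i = c j := by simp [hg, Equiv.Perm.mul_apply, Equiv.swap_apply_left]
  have hgj : g j = i := by simp [hg, Equiv.Perm.mul_apply, Equiv.swap_apply_right, hci]
  have hgx : ∀ x, x ≠ i → x ≠ j → g x = c x := by
    intro x hxi hxj
    simp [hg, Equiv.Perm.mul_apply, Equiv.swap_apply_of_ne_of_ne hxi hxj]
  have hcmi : ∀ m : ℕ, (c ^ m) i = i := by
    intro m
    induction m with
    | zero => simp
    | succ m ih => rw [pow_succ', Equiv.Perm.mul_apply, ih, hci]
  have hcji : c j ≠ i := fun h => hcj (c.injective (h.trans hci.symm) ▸ hci)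
  have claimA : ∀ m : ℕ, Equiv.Perm.SameCycle g i ((c ^ m) j) := by
    intro m
    induction m with
    | zero =>
      refine ⟨-1, ?_⟩
      have : g⁻¹ i = j := by rw [← hgj]; exact g.symm_apply_apply j
      simpa using this
    | succ m ih =>
      obtain ⟨e, he⟩ := ih
      by_cases hm : (c ^ m) j = j
      · refine ⟨1, ?_⟩
        rw [zpow_one, hgi, pow_succ', Equiv.Perm.mul_apply, hm]
      · have hmi : (c ^ m) j ≠ i := by
          intro h
          exact hij ((c ^ m).injective (h.trans (hcmi m).symm)).symm
        refine ⟨1 + e, ?_⟩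
        rw [zpow_add, zpow_one, Equiv.Perm.mul_apply, he, hg, Equiv.Perm.mul_apply,
          Equiv.swap_apply_of_ne_of_ne hmi hm, pow_succ', Equiv.Perm.mul_apply]
  refine ⟨i, by rw [hgi]; exact hcji, ?_⟩
  intro y hy
  by_cases hyi : y = i
  · exact hyi ▸ Equiv.Perm.SameCycle.refl g i
  by_cases hyj : y = j
  · subst hyj; simpa using claimA 0
  have hcy : c y ≠ y := by rw [← hgx y hyi hyj]; exact hy
  obtain ⟨m, -, hm⟩ := (hc.sameCycle hcj hcy).exists_pow_eq'
  exact hm ▸ claimA m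


lemma cyc_mul_swap {n : ℕ} (σ : Equiv.Perm (Fin n)) (i j : Fin n) (hσi : σ i = i)
    (hij : i ≠ j) : cyc (σ * Equiv.swap i j) + 1 = cyc σ := by
  set τ := σ * Equiv.swap i j with hτ
  have hτi : τ i = σ j := by simp [hτ, Equiv.Perm.mul_apply]
  have hτj : τ j = i := by simp [hτ, Equiv.Perm.mul_apply, hσi]
  have hτx : ∀ x, x ≠ i → x ≠ j → τ x = σ x := by
    intro x hxi hxj
    simp [hτ, Equiv.Perm.mul_apply, Equiv.swap_apply_of_ne_of_ne hxi hxj]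
  by_cases hσj : σ j = j
  · -- disjoint case
    have hd : Equiv.Perm.Disjoint σ (Equiv.swap i j) := by
      rw [Equiv.Perm.disjoint_iff_eq_or_eq]
      intro x
      by_cases hxi : x = i
      · exact Or.inl (hxi ▸ hσi)
      by_cases hxj : x = j
      · exact Or.inl (hxj ▸ hσj)
      · exact Or.inr (Equiv.swap_apply_of_ne_of_ne hxi hxj)
    have hct : Multiset.card τ.cycleType = Multiset.card σ.cycleType + 1 := by
      rw [hτ, hd.cycleType_mul, Multiset.card_add,
        Equiv.Perm.card_cycleType_eq_one.2 (Equiv.Perm.isCycle_swap hij)]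
    have hfix : Finset.univ.filter (fun x => τ x = x)
        = ((Finset.univ.filter fun x => σ x = x).erase i).erase j := by
      ext x
      simp only [mem_filter, mem_erase, mem_univ, true_and]
      constructor
      · intro hx
        have hxi : x ≠ i := by rintro rfl; rw [hτi, hσj] at hx; exact hij hx.symm
        have hxj : x ≠ j := by rintro rfl; rw [hτj] at hx; exact hij hx
        exact ⟨hxj, hxi, (hτx x hxi hxj) ▸ hx⟩
      · rintro ⟨hxj, hxi, hx⟩
        rw [hτx x hxi hxj]; exact hx
    have hiF : i ∈ Finset.univ.filter (fun x => σ x = x) := by simp [hσi]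
    have hjF : j ∈ (Finset.univ.filter (fun x => σ x = x)).erase i := by
      simp [hσj, hij.symm]
    have h1 := Finset.card_erase_of_mem hjF
    have h2 := Finset.card_erase_of_mem hiF
    have h3 : 0 < ((Finset.univ.filter fun x => σ x = x).erase i).card :=
      Finset.card_pos.mpr ⟨j, hjF⟩
    unfold cyc
    rw [hfix]
    omega
  · -- j is moved by σ
    set c := σ.cycleOf j with hc
    have hcc : c.IsCycle := Equiv.Perm.isCycle_cycleOf σ hσj
    have hci : c i = i := by
      rw [hc, Equiv.Perm.cycleOf_apply]
      split_ifs <;> simp [hσi]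
    have hjmem : j ∈ c.support :=
      Equiv.Perm.mem_support_cycleOf_iff.mpr ⟨Equiv.Perm.SameCycle.refl _ _,
        Equiv.Perm.mem_support.2 hσj⟩
    have hcj : c j ≠ j := Equiv.Perm.mem_support.1 hjmem
    have hagree : ∀ x, x ∈ c.support → σ (c⁻¹ x) = x := by
      intro x hx
      have hy : c⁻¹ x ∈ c.support := by
        rw [← Equiv.Perm.support_inv, Equiv.Perm.apply_mem_support]
        rwa [Equiv.Perm.support_inv]
      have hsc : σ.SameCycle j (c⁻¹ x) := (Equiv.Perm.mem_support_cycleOf_iff.1 hy).1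
      have : c (c⁻¹ x) = σ (c⁻¹ x) := by
        rw [hc, Equiv.Perm.cycleOf_apply, if_pos hsc]
      rw [← this]
      exact c.apply_symm_apply x
    set g := c * Equiv.swap i j with hg
    have hgcyc : g.IsCycle := isCycle_mul_swap c hcc i j hci hcj
    have hgsupp : ∀ x, g x ≠ x → x = i ∨ x ∈ c.support := by
      intro x hgx
      by_cases hxi : x = i
      · exact Or.inl hxi
      by_cases hxj : x = j
      · exact Or.inr (hxj ▸ hjmem)
      · refine Or.inr (Equiv.Perm.mem_support.2 ?_)
        intro hcx
        exact hgx (by rw [hg, Equiv.Perm.mul_apply, Equiv.swap_apply_of_ne_of_ne hxi hxj, hcx])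
    have hfac : τ = (σ * c⁻¹) * g := by rw [hτ, hg]; group
    have hdisj2 : Equiv.Perm.Disjoint (σ * c⁻¹) g := by
      rw [Equiv.Perm.disjoint_iff_eq_or_eq]
      intro x
      by_cases hgx : g x = x
      · exact Or.inr hgx
      refine Or.inl ?_
      rcases hgsupp x hgx with rfl | hx
      · have hi : c⁻¹ x = x := by rw [Equiv.Perm.inv_eq_iff_eq]; exact hci.symm
        rw [Equiv.Perm.mul_apply, hi, hσi]
      · rw [Equiv.Perm.mul_apply]
        exact hagree x hx
    have hcmem : c ∈ σ.cycleFactorsFinset :=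
      Equiv.Perm.cycleOf_mem_cycleFactorsFinset_iff.mpr (Equiv.Perm.mem_support.2 hσj)
    have hd1 : Equiv.Perm.Disjoint (σ * c⁻¹) c :=
      Equiv.Perm.disjoint_mul_inv_of_mem_cycleFactorsFinset hcmem
    have hσfac : σ = (σ * c⁻¹) * c := by group
    have cardτ : Multiset.card τ.cycleType = Multiset.card (σ * c⁻¹).cycleType + 1 := by
      rw [hfac, hdisj2.cycleType_mul, Multiset.card_add,
        Equiv.Perm.card_cycleType_eq_one.2 hgcyc]
    have cardσ : Multiset.card σ.cycleType = Multiset.card (σ * c⁻¹).cycleType + 1 := by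
      conv_lhs => rw [hσfac]
      rw [hd1.cycleType_mul, Multiset.card_add, Equiv.Perm.card_cycleType_eq_one.2 hcc]
    have hσji : σ j ≠ i := fun h => hij (σ.injective (hσi.trans h.symm))
    have hfix : Finset.univ.filter (fun x => τ x = x)
        = (Finset.univ.filter fun x => σ x = x).erase i := by
      ext x
      simp only [mem_filter, mem_erase, mem_univ, true_and]
      constructor
      · intro hx
        have hxi : x ≠ i := by rintro rfl; rw [hτi] at hx; exact hσji hx
        have hxj : x ≠ j := by rintro rfl; rw [hτj] at hx; exact hij hx
        exact ⟨hxi, (hτx x hxi hxj) ▸ hx⟩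
      · rintro ⟨hxi, hx⟩
        have hxj : x ≠ j := by rintro rfl; exact hσj hx
        rw [hτx x hxi hxj]; exact hx
    have hiF : i ∈ Finset.univ.filter (fun x => σ x = x) := by simp [hσi]
    have h2 := Finset.card_erase_of_mem hiF
    have h3 : 0 < (Finset.univ.filter fun x => σ x = x).card := Finset.card_pos.mpr ⟨i, hiF⟩
    unfold cyc
    rw [hfix]
    omega

lemma dispD_int {n : ℕ} (π : Equiv.Perm (Fin n)) :
    (dispD π : ℤ) = ∑ k : Fin n, |((π k).val : ℤ) - (k.val : ℤ)| := by
  unfold dispD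
  rw [Nat.cast_sum]
  exact Finset.sum_congr rfl fun k _ => Int.natCast_natAbs _

lemma dispD_mul_swap {n : ℕ} (π : Equiv.Perm (Fin n)) (i j : Fin n) (hij : i < j)
    (hπj : π j = i) (hπi : i < π i) :
    (dispD π : ℤ) = (dispD (π * Equiv.swap i j) : ℤ) +
      2 * min (((j : ℕ) : ℤ) - ((i : ℕ) : ℤ)) ((((π i : Fin n) : ℕ) : ℤ) - ((i : ℕ) : ℤ)) := by
  set π' := π * Equiv.swap i j with hπ'
  have hπ'i : π' i = i := by simp [hπ', Equiv.Perm.mul_apply, hπj]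
  have hπ'j : π' j = π i := by simp [hπ', Equiv.Perm.mul_apply]
  have hπ'x : ∀ x, x ≠ i → x ≠ j → π' x = π x := by
    intro x hxi hxj
    simp [hπ', Equiv.Perm.mul_apply, Equiv.swap_apply_of_ne_of_ne hxi hxj]
  have hji : j ≠ i := (ne_of_lt hij).symm
  have hjmem : j ∈ Finset.univ.erase i := Finset.mem_erase.mpr ⟨hji, Finset.mem_univ j⟩
  have hsplit : ∀ f : Fin n → ℤ,
      ∑ k, f k = f i + (f j + ∑ k ∈ (Finset.univ.erase i).erase j, f k) := by
    intro f
    rw [← Finset.add_sum_erase _ f (Finset.mem_univ i), ← Finset.add_sum_erase _ f hjmem]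
  rw [dispD_int, dispD_int, hsplit, hsplit (fun k => |((π' k).val : ℤ) - (k.val : ℤ)|)]
  have hrest : ∑ k ∈ (Finset.univ.erase i).erase j, |((π' k).val : ℤ) - (k.val : ℤ)|
      = ∑ k ∈ (Finset.univ.erase i).erase j, |((π k).val : ℤ) - (k.val : ℤ)| := by
    refine Finset.sum_congr rfl fun k hk => ?_
    have hk' := Finset.mem_erase.1 hk
    have hki := (Finset.mem_erase.1 hk'.2).1
    rw [hπ'x k hki hk'.1]
  rw [hrest, hπj, hπ'i, hπ'j]
  have ha : (i : ℕ) < (j : ℕ) := hij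
  have hb : (i : ℕ) < ((π i : Fin n) : ℕ) := hπi
  set S := ∑ k ∈ (Finset.univ.erase i).erase j, |((π k).val : ℤ) - (k.val : ℤ)|
  set a := ((i : ℕ) : ℤ); set b := ((j : ℕ) : ℤ); set v := (((π i : Fin n) : ℕ) : ℤ)
  have ha' : a < b := by simp [a, b]; exact_mod_cast ha
  have hb' : a < v := by simp [a, v]; exact_mod_cast hb
  have h1 : |v - a| = v - a := abs_of_nonneg (by omega)
  have h2 : |a - b| = b - a := by rw [abs_sub_comm]; exact abs_of_nonneg (by omega)
  have h3 : |a - a| = 0 := by simp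
  rcases le_total v b with h | h
  · rw [h1, h2, h3, abs_of_nonpos (by omega : v - b ≤ 0)]
    omega
  · rw [h1, h2, h3, abs_of_nonneg (by omega : 0 ≤ v - b)]
    omega

lemma invI_mul_swap {n : ℕ} (π : Equiv.Perm (Fin n)) (i j : Fin n) (hij : i < j)
    (hπj : π j = i) (hπi : i < π i) (hlow : ∀ k, k < i → π k = k)
    (hbig : ∀ k : Fin n, i ≤ k → k ≠ j → i < π k) :
    invI π + 1 ≤ invI (π * Equiv.swap i j) + 2 * min ((j : ℕ) - (i : ℕ)) (((π i : Fin n) : ℕ) - (i : ℕ)) := by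
  set π' := π * Equiv.swap i j with hπ'
  have hπ'i : π' i = i := by simp [hπ', Equiv.Perm.mul_apply, hπj]
  have hπ'j : π' j = π i := by simp [hπ', Equiv.Perm.mul_apply]
  have hπ'x : ∀ x, x ≠ i → x ≠ j → π' x = π x := by
    intro x hxi hxj
    simp [hπ', Equiv.Perm.mul_apply, Equiv.swap_apply_of_ne_of_ne hxi hxj]
  -- if π b < i then b < i and π b = b
  have hval : ∀ b : Fin n, π b < i → π b = b := by
    intro b hb
    exact π.injective (hlow (π b) hb)
  have hval' : ∀ b : Fin n, π b < i → b < i := by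
    intro b hb
    have := hval b hb
    rwa [this] at hb
  set S := Finset.univ.filter fun p : Fin n × Fin n => p.1 < p.2 ∧ π p.2 < π p.1 with hS
  set S' := Finset.univ.filter fun p : Fin n × Fin n => p.1 < p.2 ∧ π' p.2 < π' p.1 with hS'
  set K := (Finset.Ioo i j).filter (fun k => π k < π i) with hK
  set E := (({(i, j)} : Finset (Fin n × Fin n)) ∪ K.image fun k => (i, k)) ∪
      (K.image fun k => (k, j)) with hE
  set F : Fin n × Fin n → Fin n × Fin n := fun p => if p.1 = i ∧ j < p.2 then (j, p.2) else p
    with hF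
  -- no element of S has first coordinate j
  have hnoj : ∀ p : Fin n × Fin n, p ∈ S → p.1 ≠ j := by
    rintro ⟨a, b⟩ hp rfl
    simp only [hS, Finset.mem_filter] at hp
    obtain ⟨-, hab, hinv⟩ := hp
    rw [hπj] at hinv
    exact lt_asymm (hij.trans hab) (hval' b hinv)
  have hmaps : ∀ p ∈ S, F p ∈ S' ∪ E := by
    rintro ⟨a, b⟩ hp
    simp only [hS, Finset.mem_filter, Finset.mem_univ, true_and] at hp
    obtain ⟨hab, hinv⟩ := hp
    have haj : a ≠ j := hnoj (a, b) (by
      simp only [hS, Finset.mem_filter, Finset.mem_univ, true_and]; exact ⟨hab, hinv⟩)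
    by_cases hcond : a = i ∧ j < b
    · have hFp : F (a, b) = (j, b) := if_pos hcond
      rw [hFp]
      refine Finset.mem_union_left _ ?_
      simp only [hS', Finset.mem_filter, Finset.mem_univ, true_and, Prod.fst, Prod.snd]
      have hbne_i : b ≠ i := (hij.trans hcond.2).ne'
      have hbne_j : b ≠ j := ne_of_gt hcond.2
      refine ⟨hcond.2, ?_⟩
      rw [hπ'j, hπ'x b hbne_i hbne_j]
      rw [hcond.1] at hinv
      exact hinv
    · have hFp : F (a, b) = (a, b) := if_neg hcond
      rw [hFp]
      by_cases hai : a = i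
      · subst hai
        have hb_le : b ≤ j := by
          rcases not_and_or.1 hcond with h | h
          · exact absurd rfl h
          · exact not_lt.1 h
        rcases eq_or_lt_of_le hb_le with rfl | hbj
        · exact Finset.mem_union_right _ (Finset.mem_union_left _ (Finset.mem_union_left _ (by simp)))
        · refine Finset.mem_union_right _ (Finset.mem_union_left _ (Finset.mem_union_right _ ?_))
          refine Finset.mem_image.2 ⟨b, ?_, rfl⟩
          rw [hK]
          exact Finset.mem_filter.2 ⟨Finset.mem_Ioo.2 ⟨hab, hbj⟩, hinv⟩
      · -- a ≠ i
        have hia : i < a := by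
          rcases lt_trichotomy a i with h | h | h
          · exfalso
            have hπa : π a = a := hlow a h
            rw [hπa] at hinv
            have hπb : π b = b := hval b (hinv.trans h)
            rw [hπb] at hinv
            exact lt_asymm hab hinv
          · exact absurd h hai
          · exact h
        by_cases hbj : b = j
        · subst hbj
          rw [hπj] at hinv
          by_cases hπa : π a < π i
          · refine Finset.mem_union_right _ (Finset.mem_union_right _ ?_)
            refine Finset.mem_image.2 ⟨a, ?_, rfl⟩
            rw [hK]
            exact Finset.mem_filter.2 ⟨Finset.mem_Ioo.2 ⟨hia, hab⟩, hπa⟩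
          · refine Finset.mem_union_left _ ?_
            simp only [hS', Finset.mem_filter, Finset.mem_univ, true_and, Prod.fst, Prod.snd]
            refine ⟨hab, ?_⟩
            rw [hπ'j, hπ'x a hai haj]
            rcases lt_or_eq_of_le (not_lt.1 hπa) with h | h
            · exact h
            · exact absurd (π.injective h).symm hai
        · -- a, b ∉ {i, j}
          have hbi : b ≠ i := fun h => lt_asymm (h ▸ hab) (h ▸ hia)
          refine Finset.mem_union_left _ ?_
          simp only [hS', Finset.mem_filter, Finset.mem_univ, true_and, Prod.fst, Prod.snd]
          refine ⟨hab, ?_⟩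
          rw [hπ'x a hai haj, hπ'x b hbi hbj]
          exact hinv
  have hinj : Set.InjOn F ↑S := by
    rintro ⟨a, b⟩ ha ⟨a', b'⟩ hb heq
    have ha' : (a, b) ∈ S := ha
    have hb' : (a', b') ∈ S := hb
    by_cases h1 : a = i ∧ j < b <;> by_cases h2 : a' = i ∧ j < b'
    · rw [show F (a, b) = (j, b) from if_pos h1, show F (a', b') = (j, b') from if_pos h2] at heq
      have hbb : b = b' := congrArg Prod.snd heq
      rw [h1.1, h2.1, hbb]
    · rw [show F (a, b) = (j, b) from if_pos h1, show F (a', b') = (a', b') from if_neg h2] at heq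
      have hja : j = a' := congrArg Prod.fst heq
      exact absurd hja.symm (hnoj (a', b') hb')
    · rw [show F (a, b) = (a, b) from if_neg h1, show F (a', b') = (j, b') from if_pos h2] at heq
      have hja : a = j := congrArg Prod.fst heq
      exact absurd hja (hnoj (a, b) ha')
    · rwa [show F (a, b) = (a, b) from if_neg h1, show F (a', b') = (a', b') from if_neg h2]
        at heq
  have hcard1 : S.card ≤ (S' ∪ E).card := Finset.card_le_card_of_injOn F hmaps hinj
  have hcard2 : (S' ∪ E).card ≤ S'.card + E.card := Finset.card_union_le _ _
  have hcardE : E.card ≤ 1 + K.card + K.card := by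
    refine le_trans (Finset.card_union_le _ _) (add_le_add ?_ Finset.card_image_le)
    refine le_trans (Finset.card_union_le _ _) (add_le_add ?_ Finset.card_image_le)
    exact le_of_eq (Finset.card_singleton _)
  have hK1 : K.card ≤ (j : ℕ) - (i : ℕ) - 1 := by
    have h := Finset.card_le_card (Finset.filter_subset (fun k => π k < π i) (Finset.Ioo i j))
    rwa [Fin.card_Ioo] at h
  have hK2 : K.card ≤ ((π i : Fin n) : ℕ) - (i : ℕ) - 1 := by
    have himg : K.image (fun k => π k) ⊆ Finset.Ioo i (π i) := by
      intro v hv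
      obtain ⟨k, hk, rfl⟩ := Finset.mem_image.1 hv
      have hk' : k ∈ (Finset.Ioo i j).filter (fun k => π k < π i) := hk
      obtain ⟨hIoo, hlt⟩ := Finset.mem_filter.1 hk'
      obtain ⟨hk1, hk2⟩ := Finset.mem_Ioo.1 hIoo
      exact Finset.mem_Ioo.2 ⟨hbig k (le_of_lt hk1) (ne_of_lt hk2), hlt⟩
    have h1 : K.card = (K.image (fun k => π k)).card :=
      (Finset.card_image_of_injective K π.injective).symm
    have h2 := Finset.card_le_card himg
    rw [Fin.card_Ioo] at h2
    omega
  have hijv : (i : ℕ) < (j : ℕ) := hij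
  have hπiv : (i : ℕ) < ((π i : Fin n) : ℕ) := hπi
  have e1 : invI π = S.card := rfl
  have e2 : invI π' = S'.card := rfl
  rw [e1, e2]
  omega


lemma one_case {n : ℕ} :
    (invI (1 : Equiv.Perm (Fin n)) : ℤ) + n ≤
      (dispD (1 : Equiv.Perm (Fin n)) : ℤ) + (cyc (1 : Equiv.Perm (Fin n)) : ℤ) := by
  have h1 : invI (1 : Equiv.Perm (Fin n)) = 0 := by
    unfold invI
    rw [Finset.card_eq_zero, Finset.filter_eq_empty_iff]
    rintro p -
    rintro ⟨ha, hb⟩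
    simp only [Equiv.Perm.one_apply] at hb
    exact lt_asymm ha hb
  have h2 : dispD (1 : Equiv.Perm (Fin n)) = 0 := by simp [dispD]
  have h3 : cyc (1 : Equiv.Perm (Fin n)) = n := by
    unfold cyc
    rw [Equiv.Perm.cycleType_one]
    simp
  rw [h1, h2, h3]

lemma main_ineq {n : ℕ} : ∀ (N : ℕ) (π : Equiv.Perm (Fin n)), π.support.card ≤ N →
    (invI π : ℤ) + n ≤ (dispD π : ℤ) + (cyc π : ℤ) := by
  intro N
  induction N with
  | zero =>
    intro π hπ
    have h : π = 1 := by
      rw [← Equiv.Perm.support_eq_empty_iff]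
      exact Finset.card_eq_zero.1 (Nat.le_zero.1 hπ)
    rw [h]; exact one_case
  | succ N ih =>
    intro π hπ
    by_cases h1 : π = 1
    · rw [h1]; exact one_case
    have hne : π.support.Nonempty := by
      rw [Finset.nonempty_iff_ne_empty, Ne, Equiv.Perm.support_eq_empty_iff]; exact h1
    set i := π.support.min' hne with hi
    have himem : i ∈ π.support := Finset.min'_mem _ _
    have hπine : π i ≠ i := Equiv.Perm.mem_support.1 himem
    have hlow : ∀ k, k < i → π k = k := by
      intro k hk
      by_contra hc
      exact absurd (Finset.min'_le _ k (Equiv.Perm.mem_support.2 hc)) (not_le.2 hk)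
    have hπi : i < π i := by
      rcases lt_trichotomy (π i) i with h | h | h
      · exact absurd (π.injective (hlow (π i) h)) hπine
      · exact absurd h hπine
      · exact h
    set j := π⁻¹ i with hj
    have hπj : π j = i := π.apply_symm_apply i
    have hjne : j ≠ i := fun h => hπine (h ▸ hπj)
    have hjmem : j ∈ π.support := Equiv.Perm.mem_support.2 (by rw [hπj]; exact Ne.symm hjne)
    have hij : i < j := lt_of_le_of_ne (Finset.min'_le _ j hjmem) (Ne.symm hjne)
    have hbig : ∀ k : Fin n, i ≤ k → k ≠ j → i < π k := by
      intro k hk hkj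
      have hne1 : π k ≠ i := by
        intro h
        exact hkj (by rw [hj, ← h, Equiv.Perm.inv_def, Equiv.symm_apply_apply])
      rcases lt_trichotomy (π k) i with h | h | h
      · have h2 := π.injective (hlow (π k) h)
        rw [h2] at h
        exact absurd hk (not_le.2 h)
      · exact absurd h hne1
      · exact h
    set π' := π * Equiv.swap i j with hπ'def
    have hπ'i : π' i = i := by simp [hπ'def, Equiv.Perm.mul_apply, hπj]
    have hsupp' : π'.support ⊆ π.support.erase i := by
      intro k hk
      have hk1 : π' k ≠ k := Equiv.Perm.mem_support.1 hk
      have hki : k ≠ i := fun h => hk1 (h ▸ hπ'i)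
      refine Finset.mem_erase.2 ⟨hki, Equiv.Perm.mem_support.2 ?_⟩
      by_cases hkj : k = j
      · rw [hkj, hπj]; exact Ne.symm hjne
      · intro h
        exact hk1 (by
          rw [hπ'def]
          simp [Equiv.Perm.mul_apply, Equiv.swap_apply_of_ne_of_ne hki hkj, h])
    have hcard' : π'.support.card ≤ N := by
      have h2 := Finset.card_le_card hsupp'
      rw [Finset.card_erase_of_mem himem] at h2
      have h3 : 1 ≤ π.support.card := Finset.card_pos.2 hne
      omega
    have IH := ih π' hcard'
    have hD := dispD_mul_swap π i j hij hπj hπi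
    have hI := invI_mul_swap π i j hij hπj hπi hlow hbig
    have hswap : π' * Equiv.swap i j = π := by
      rw [hπ'def, mul_assoc, Equiv.swap_mul_self, mul_one]
    have hC : cyc π + 1 = cyc π' := by
      have h := cyc_mul_swap π' i j hπ'i (ne_of_lt hij)
      rwa [hswap] at h
    have hijv : (i : ℕ) < (j : ℕ) := hij
    have hπiv : (i : ℕ) < ((π i : Fin n) : ℕ) := hπi
    have hmin : ((min ((j : ℕ) - (i : ℕ)) (((π i : Fin n) : ℕ) - (i : ℕ)) : ℕ) : ℤ)
        = min (((j : ℕ) : ℤ) - ((i : ℕ) : ℤ)) ((((π i : Fin n) : ℕ) : ℤ) - ((i : ℕ) : ℤ)) := by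
      push_cast
      omega
    rw [← hmin] at hD
    have hDn : dispD π = dispD (π * Equiv.swap i j) +
        2 * min ((j : ℕ) - (i : ℕ)) (((π i : Fin n) : ℕ) - (i : ℕ)) := by
      exact_mod_cast hD
    rw [← hπ'def] at hDn hI
    omega

theorem xStat_ge_neg_cyc (n : ℕ) (π : Equiv.Perm (Fin n)) :
    (0 : ℤ) ≤ (dispD π : ℤ) - (invI π : ℤ) - (n : ℤ) + (cyc π : ℤ) ∧
      xStat π ≥ -(cyc π : ℤ) := by
  have h := main_ineq π.support.card π le_rfl
  constructor
  · omega
  · unfold xStat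
    omega
end

section
/- An occurrence of a 3-inversion forces strict inequality in the second Diaconis–Graham bound: if there exist i < j < k with π(i) > π(j) > π(k), then D(π) < 2·I(π). -/
open Equiv Finset

namespace ThreeInvAux

variable {n : ℕ}

lemma swap_adj_lt {P Q x y : Fin n} (hq : (Q : ℕ) = (P : ℕ) + 1)
    (hxy : x < y) (hne : ¬(x = P ∧ y = Q)) :
    Equiv.swap P Q x < Equiv.swap P Q y := by
  have hxy' : (x : ℕ) < (y : ℕ) := hxy
  simp only [Equiv.swap_apply_def]
  split_ifs <;>
    · simp only [Fin.lt_def, Fin.ext_iff, not_and] at *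
      omega

lemma invI_swap {π : Equiv.Perm (Fin n)} {P Q : Fin n} (hq : (Q : ℕ) = (P : ℕ) + 1)
    (hd : π Q < π P) :
    invI (π * Equiv.swap P Q) + 1 = invI π := by
  classical
  have hPQ : P < Q := by rw [Fin.lt_def]; omega
  have hmem : (P, Q) ∈ univ.filter
      (fun p : Fin n × Fin n => p.1 < p.2 ∧ π p.2 < π p.1) := by
    simp only [mem_filter, mem_univ, true_and]
    exact ⟨hPQ, hd⟩
  have key : ((univ.filter fun p : Fin n × Fin n =>
        p.1 < p.2 ∧ π p.2 < π p.1).erase (P, Q)).card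
      = (univ.filter fun p : Fin n × Fin n =>
        p.1 < p.2 ∧ (π * Equiv.swap P Q) p.2 < (π * Equiv.swap P Q) p.1).card := by
    apply Finset.card_nbij' (i := fun p => (Equiv.swap P Q p.1, Equiv.swap P Q p.2))
      (j := fun p => (Equiv.swap P Q p.1, Equiv.swap P Q p.2))
    · intro a ha
      simp only [Finset.mem_coe, mem_erase, mem_filter, mem_univ, true_and] at ha ⊢
      obtain ⟨hane, h1, h2⟩ := ha
      have hne' : ¬(a.1 = P ∧ a.2 = Q) := by
        rintro ⟨e1, e2⟩
        exact hane (Prod.ext e1 e2)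
      refine ⟨swap_adj_lt hq h1 hne', ?_⟩
      simp only [Equiv.Perm.mul_apply, Equiv.swap_apply_self]
      exact h2
    · intro b hb
      simp only [Finset.mem_coe, mem_filter, mem_univ, true_and] at hb
      obtain ⟨h1, h2⟩ := hb
      simp only [Equiv.Perm.mul_apply] at h2
      have hne' : ¬(b.1 = P ∧ b.2 = Q) := by
        rintro ⟨e1, e2⟩
        rw [e1, e2, Equiv.swap_apply_left, Equiv.swap_apply_right] at h2
        exact absurd h2 (not_lt.mpr hd.le)
      simp only [Finset.mem_coe, mem_erase, mem_filter, mem_univ, true_and]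
      refine ⟨?_, swap_adj_lt hq h1 hne', h2⟩
      intro hEq
      have e1 : Equiv.swap P Q b.1 = P := congrArg Prod.fst hEq
      have e2 : Equiv.swap P Q b.2 = Q := congrArg Prod.snd hEq
      have b1 : b.1 = Q := by
        have := congrArg (Equiv.swap P Q) e1
        simpa [Equiv.swap_apply_self] using this
      have b2 : b.2 = P := by
        have := congrArg (Equiv.swap P Q) e2
        simpa [Equiv.swap_apply_self] using this
      rw [b1, b2] at h1
      exact absurd (hPQ.trans h1) (lt_irrefl P)
    · intro a _
      simp [Equiv.swap_apply_self]
    · intro a _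
      simp [Equiv.swap_apply_self]
  have hcard := Finset.card_erase_of_mem hmem
  have hpos : 0 < (univ.filter
      (fun p : Fin n × Fin n => p.1 < p.2 ∧ π p.2 < π p.1)).card :=
    Finset.card_pos.mpr ⟨(P, Q), hmem⟩
  unfold invI
  omega

lemma dispD_swap_key (π : Equiv.Perm (Fin n)) {P Q : Fin n} (hPQ : P ≠ Q) :
    dispD (π * Equiv.swap P Q)
      + ((((π P).val : ℤ) - (P.val : ℤ)).natAbs + (((π Q).val : ℤ) - (Q.val : ℤ)).natAbs)
    = dispD π
      + ((((π Q).val : ℤ) - (P.val : ℤ)).natAbs + (((π P).val : ℤ) - (Q.val : ℤ)).natAbs) := by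
  classical
  set f : Fin n → ℕ := fun i => (((π i).val : ℤ) - (i.val : ℤ)).natAbs with hf
  set g : Fin n → ℕ :=
    fun i => ((((π * Equiv.swap P Q) i).val : ℤ) - (i.val : ℤ)).natAbs with hg
  have hQmem : Q ∈ (univ : Finset (Fin n)).erase P := by
    simp [Ne.symm hPQ]
  have e1 : (∑ x ∈ (univ.erase P).erase Q, f x) + f Q + f P = dispD π := by
    rw [Finset.sum_erase_add _ _ hQmem, Finset.sum_erase_add _ _ (mem_univ P)]
    rfl
  have e2 : (∑ x ∈ (univ.erase P).erase Q, g x) + g Q + g P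
      = dispD (π * Equiv.swap P Q) := by
    rw [Finset.sum_erase_add _ _ hQmem, Finset.sum_erase_add _ _ (mem_univ P)]
    rfl
  have hfg : ∑ x ∈ (univ.erase P).erase Q, f x = ∑ x ∈ (univ.erase P).erase Q, g x := by
    apply Finset.sum_congr rfl
    intro x hx
    simp only [mem_erase] at hx
    simp only [hf, hg, Equiv.Perm.mul_apply,
      Equiv.swap_apply_of_ne_of_ne hx.2.1 hx.1]
  have hgQ : g Q = (((π P).val : ℤ) - (Q.val : ℤ)).natAbs := by
    simp [hg, Equiv.Perm.mul_apply]
  have hgP : g P = (((π Q).val : ℤ) - (P.val : ℤ)).natAbs := by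
    simp [hg, Equiv.Perm.mul_apply]
  have hfQ : f Q = (((π Q).val : ℤ) - (Q.val : ℤ)).natAbs := rfl
  have hfP : f P = (((π P).val : ℤ) - (P.val : ℤ)).natAbs := rfl
  omega

lemma dispD_swap_le (π : Equiv.Perm (Fin n)) {P Q : Fin n} (hq : (Q : ℕ) = (P : ℕ) + 1) :
    dispD π ≤ dispD (π * Equiv.swap P Q) + 2 := by
  have hPQ : P ≠ Q := by
    intro h; rw [h] at hq; omega
  have key := dispD_swap_key π hPQ
  omega

lemma dispD_swap_le' (π : Equiv.Perm (Fin n)) {P Q : Fin n} (hq : (Q : ℕ) = (P : ℕ) + 1)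
    (hd : π Q < π P) (hΔ : ¬((P : ℕ) < ((π P : Fin n) : ℕ) ∧ ((π Q : Fin n) : ℕ) ≤ (P : ℕ))) :
    dispD π ≤ dispD (π * Equiv.swap P Q) := by
  have hPQ : P ≠ Q := by
    intro h; rw [h] at hq; omega
  have key := dispD_swap_key π hPQ
  have hd' : ((π Q : Fin n) : ℕ) < ((π P : Fin n) : ℕ) := hd
  omega

lemma exists_descent (π : Equiv.Perm (Fin n)) :
    ∀ (d : ℕ) (i j : Fin n), (j : ℕ) - (i : ℕ) ≤ d → i < j → π j < π i →
    ∃ (p : ℕ) (h1 : p + 1 < n),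
      (i : ℕ) ≤ p ∧ p < (j : ℕ) ∧
      π ⟨p + 1, h1⟩ < π ⟨p, Nat.lt_of_succ_lt h1⟩ := by
  intro d
  induction d with
  | zero =>
    intro i j hd hij _
    have := Fin.lt_def.mp hij
    omega
  | succ d ih =>
    intro i j hd hij hπ
    have hij' : (i : ℕ) < (j : ℕ) := hij
    have hi1 : (i : ℕ) + 1 < n := lt_of_le_of_lt hij' j.isLt
    set i' : Fin n := ⟨(i : ℕ) + 1, hi1⟩ with hi'
    by_cases hc : π i' < π i
    · exact ⟨(i : ℕ), hi1, le_refl _, hij', hc⟩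
    · have hle : π i ≤ π i' := le_of_not_gt hc
      by_cases hj : (i : ℕ) + 1 = (j : ℕ)
      · exfalso
        have heq : i' = j := Fin.ext hj
        rw [heq] at hle
        exact absurd hπ (not_lt.mpr hle)
      · have hi'j : i' < j := by
          rw [Fin.lt_def]
          simp only [hi']
          omega
        have hπ' : π j < π i' := lt_of_lt_of_le hπ hle
        have hval : (i' : ℕ) = (i : ℕ) + 1 := rfl
        obtain ⟨p, h1, hp1, hp2, hp3⟩ := ih i' j (by omega) hi'j hπ'
        exact ⟨p, h1, by omega, hp2, hp3⟩

lemma le_apply_of_strictMono {f : Fin n → Fin n} (hf : StrictMono f) (x : Fin n) :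
    x ≤ f x := by
  have hmap : ∀ y ∈ Finset.Iio x, f y ∈ Finset.Iio (f x) := by
    intro y hy
    simp only [Finset.mem_Iio] at *
    exact hf hy
  have hc := Finset.card_le_card_of_injOn f hmap (hf.injective.injOn)
  rw [Fin.card_Iio, Fin.card_Iio] at hc
  exact hc

lemma eq_self_of_no_inv {π : Equiv.Perm (Fin n)}
    (h : ∀ x y : Fin n, x < y → ¬ π y < π x) (x : Fin n) : π x = x := by
  have hsm : StrictMono π := by
    intro a b hab
    rcases lt_trichotomy (π a) (π b) with h' | h' | h'
    · exact h'
    · exact absurd (π.injective h') (ne_of_lt hab)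
    · exact absurd h' (h a b hab)
  have hsm' : StrictMono (π.symm) := by
    intro a b hab
    rcases lt_trichotomy (π.symm a) (π.symm b) with h' | h' | h'
    · exact h'
    · exact absurd (π.symm.injective h') (ne_of_lt hab)
    · have := hsm h'
      simp only [Equiv.apply_symm_apply] at this
      exact absurd hab (not_lt.mpr this.le)
  have h1 := le_apply_of_strictMono hsm x
  have h2 := le_apply_of_strictMono hsm' (π x)
  simp only [Equiv.symm_apply_apply] at h2
  exact le_antisymm h2 h1

lemma dispD_eq_zero_of_no_inv {π : Equiv.Perm (Fin n)}
    (h : ∀ x y : Fin n, x < y → ¬ π y < π x) : dispD π = 0 := by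
  unfold dispD
  apply Finset.sum_eq_zero
  intro x _
  rw [eq_self_of_no_inv h x]
  simp

lemma invI_pos_of_inv {π : Equiv.Perm (Fin n)} {x y : Fin n}
    (hxy : x < y) (hinv : π y < π x) : 0 < invI π := by
  apply Finset.card_pos.mpr
  exact ⟨(x, y), by simp only [mem_filter, mem_univ, true_and]; exact ⟨hxy, hinv⟩⟩

lemma weak_aux : ∀ (N : ℕ) (π : Equiv.Perm (Fin n)), invI π ≤ N →
    dispD π ≤ 2 * invI π := by
  intro N
  induction N with
  | zero =>
    intro π hN
    by_cases hinv : ∃ x y : Fin n, x < y ∧ π y < π x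
    · obtain ⟨x, y, hxy, hyx⟩ := hinv
      have := invI_pos_of_inv hxy hyx
      omega
    · push_neg at hinv
      rw [dispD_eq_zero_of_no_inv (fun x y hxy => not_lt.mpr (hinv x y hxy))]
      omega
  | succ N ih =>
    intro π hN
    by_cases hinv : ∃ x y : Fin n, x < y ∧ π y < π x
    · obtain ⟨x, y, hxy, hyx⟩ := hinv
      obtain ⟨p, h1, _, _, hdesc⟩ := exists_descent π n x y (by omega) hxy hyx
      set P : Fin n := ⟨p, Nat.lt_of_succ_lt h1⟩
      set Q : Fin n := ⟨p + 1, h1⟩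
      have hq : (Q : ℕ) = (P : ℕ) + 1 := rfl
      have hIs := invI_swap hq hdesc
      have hDs := dispD_swap_le π hq
      have := ih (π * Equiv.swap P Q) (by omega)
      omega
    · push_neg at hinv
      rw [dispD_eq_zero_of_no_inv (fun x y hxy => not_lt.mpr (hinv x y hxy))]
      omega

lemma exists_big (π : Equiv.Perm (Fin n)) {i j k : Fin n} (hij : i < j) (hjk : j < k)
    (hπj : π j ≤ i) (hπk : π k < π j) : ∃ q : Fin n, q < i ∧ i < π q := by
  by_contra hcon
  push_neg at hcon
  have hsub : insert j (insert k (Finset.Iio i)) ⊆ univ.filter fun x => π x ≤ i := by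
    intro x hx
    simp only [Finset.mem_insert, Finset.mem_Iio] at hx
    simp only [mem_filter, mem_univ, true_and]
    rcases hx with rfl | rfl | hx
    · exact hπj
    · exact (hπk.trans_le hπj).le
    · exact hcon x hx
  have hjk' : j ≠ k := ne_of_lt hjk
  have hknotin : k ∉ Finset.Iio i := by
    simp only [Finset.mem_Iio, not_lt]
    exact (hij.trans hjk).le
  have hjnotin : j ∉ insert k (Finset.Iio i) := by
    simp only [Finset.mem_insert, Finset.mem_Iio, not_or, not_lt]
    exact ⟨hjk', hij.le⟩
  have hcard1 : (insert j (insert k (Finset.Iio i))).card = (i : ℕ) + 2 := by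
    rw [Finset.card_insert_of_notMem hjnotin, Finset.card_insert_of_notMem hknotin,
      Fin.card_Iio]
  have himg : (univ.filter fun x => π x ≤ i) = (Finset.Iic i).image π.symm := by
    ext x
    simp only [mem_filter, mem_univ, true_and, Finset.mem_image, Finset.mem_Iic]
    constructor
    · intro hx
      exact ⟨π x, hx, π.symm_apply_apply x⟩
    · rintro ⟨a, ha, rfl⟩
      simpa using ha
  have hcard2 : (univ.filter fun x => π x ≤ i).card = (i : ℕ) + 1 := by
    rw [himg, Finset.card_image_of_injective _ π.symm.injective, Fin.card_Iic]
  have := Finset.card_le_card hsub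
  omega

lemma main_aux : ∀ (N : ℕ) (π : Equiv.Perm (Fin n)), invI π ≤ N →
    (∃ i j k : Fin n, i < j ∧ j < k ∧ π k < π j ∧ π j < π i) →
    dispD π + 2 ≤ 2 * invI π := by
  intro N
  induction N with
  | zero =>
    intro π hN ⟨i, j, k, hij, hjk, hkj, hji⟩
    have := invI_pos_of_inv hjk hkj
    omega
  | succ N ih =>
    intro π hN ⟨i, j, k, hij, hjk, hkj, hji⟩
    obtain ⟨p, h1, hpi, hpj, hdesc⟩ := exists_descent π n i j (by omega) hij hji
    set P : Fin n := ⟨p, Nat.lt_of_succ_lt h1⟩ with hP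
    set Q : Fin n := ⟨p + 1, h1⟩ with hQ
    have hq : (Q : ℕ) = (P : ℕ) + 1 := rfl
    set π' := π * Equiv.swap P Q with hπ'
    have hIs : invI π' + 1 = invI π := by rw [hπ']; exact invI_swap hq hdesc
    have hDs : dispD π ≤ dispD π' + 2 := by rw [hπ']; exact dispD_swap_le π hq
    have hval : ∀ x : Fin n, x ≠ P → x ≠ Q → π' x = π x := by
      intro x hx1 hx2
      simp [hπ', Equiv.Perm.mul_apply, Equiv.swap_apply_of_ne_of_ne hx1 hx2]
    have hvP : π' P = π Q := by simp [hπ', Equiv.Perm.mul_apply]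
    have hvQ : π' Q = π P := by simp [hπ', Equiv.Perm.mul_apply]
    -- useful ℕ facts
    have hPval : (P : ℕ) = p := rfl
    have hQval : (Q : ℕ) = p + 1 := rfl
    have hjQ : (Q : ℕ) ≤ (j : ℕ) := by omega
    have hjkn : (j : ℕ) < (k : ℕ) := hjk
    have hijn : (i : ℕ) < (j : ℕ) := hij
    have hkP : k ≠ P := by
      intro h; rw [h] at hjkn; omega
    have hkQ : k ≠ Q := by
      intro h
      have : (k : ℕ) = p + 1 := by rw [h]
      omega
    by_cases hPi : P = i
    · by_cases hQj : Q = j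
      · -- special case : swap exactly at (i, j), j = i + 1
        by_cases hΔ : (P : ℕ) < ((π P : Fin n) : ℕ) ∧ ((π Q : Fin n) : ℕ) ≤ (P : ℕ)
        · -- Δ = 2 : find q < i with π q > i, new pattern (q, i, k)
          have hπji : π j ≤ i := by
            rw [← hQj, ← hPi]
            exact Fin.le_def.mpr hΔ.2
          obtain ⟨q, hq1, hq2⟩ := exists_big π hij hjk hπji hkj
          have hqP : q ≠ P := by
            intro h; rw [hPi] at h; exact absurd hq1 (h ▸ lt_irrefl i)
          have hqQ : q ≠ Q := by
            intro h
            have : (q : ℕ) = p + 1 := by rw [h]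
            have : (q : ℕ) < (i : ℕ) := hq1
            omega
          have hiQne0 : i ≠ Q := by
            intro h
            have : (i : ℕ) = p + 1 := by rw [h]
            omega
          have hpat' : ∃ a b c : Fin n, a < b ∧ b < c ∧ π' c < π' b ∧ π' b < π' a := by
            refine ⟨q, i, k, hq1, hij.trans hjk, ?_, ?_⟩
            · -- π' k < π' i : π k < π j
              rw [hval k hkP hkQ]
              rw [← hPi, hvP, hQj]
              exact hkj
            · -- π' i < π' q : π j < π q  (π j ≤ i < π q)
              rw [hval q hqP hqQ]
              rw [← hPi, hvP, hQj]
              exact lt_of_le_of_lt hπji hq2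
          have := ih π' (by omega) hpat'
          omega
        · -- Δ ≤ 0
          have hDs' : dispD π ≤ dispD π' := by
            rw [hπ']; exact dispD_swap_le' π hq hdesc hΔ
          have hweak := weak_aux (invI π') π' (le_refl _)
          omega
      · -- P = i, Q ≠ j : pattern (Q, j, k)
        have hQjlt : (Q : ℕ) < (j : ℕ) := by
          rcases lt_or_eq_of_le hjQ with h | h
          · exact h
          · exact absurd (Fin.ext h) hQj
        have hjP : j ≠ P := by
          intro h
          have : (j : ℕ) = p := by rw [h]
          omega
        have hpat' : ∃ a b c : Fin n, a < b ∧ b < c ∧ π' c < π' b ∧ π' b < π' a := by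
          refine ⟨Q, j, k, Fin.lt_def.mpr hQjlt, hjk, ?_, ?_⟩
          · rw [hval k hkP hkQ, hval j hjP (fun h => hQj h.symm)]
            exact hkj
          · rw [hval j hjP (fun h => hQj h.symm), hvQ, hPi]
            exact hji
        have := ih π' (by omega) hpat'
        omega
    · -- P ≠ i : i < p
      have hiP : (i : ℕ) < p := by
        rcases lt_or_eq_of_le hpi with h | h
        · exact h
        · exact absurd (Fin.ext (h.symm : p = (i : ℕ)) : P = i) hPi
      have hiPne : i ≠ P := by
        intro h
        have : (i : ℕ) = p := by rw [h]
        omega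
      have hiQne : i ≠ Q := by
        intro h
        have : (i : ℕ) = p + 1 := by rw [h]
        omega
      by_cases hQj : Q = j
      · -- pattern (i, P, k)
        have hpat' : ∃ a b c : Fin n, a < b ∧ b < c ∧ π' c < π' b ∧ π' b < π' a := by
          refine ⟨i, P, k, Fin.lt_def.mpr hiP, Fin.lt_def.mpr (by omega : (P : ℕ) < (k : ℕ)), ?_, ?_⟩
          · rw [hval k hkP hkQ, hvP, hQj]
            exact hkj
          · rw [hvP, hQj, hval i hiPne hiQne]
            exact hji
        have := ih π' (by omega) hpat'
        omega
      · -- pattern (i, j, k) intact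
        have hjP : j ≠ P := by
          intro h
          have : (j : ℕ) = p := by rw [h]
          omega
        have hjQne : j ≠ Q := fun h => hQj h.symm
        have hpat' : ∃ a b c : Fin n, a < b ∧ b < c ∧ π' c < π' b ∧ π' b < π' a := by
          refine ⟨i, j, k, hij, hjk, ?_, ?_⟩
          · rw [hval k hkP hkQ, hval j hjP hjQne]
            exact hkj
          · rw [hval j hjP hjQne, hval i hiPne hiQne]
            exact hji
        have := ih π' (by omega) hpat'
        omega

end ThreeInvAux

theorem three_inversion_strict (n : ℕ) (π : Equiv.Perm (Fin n))
    (h : ∃ i j k : Fin n, i < j ∧ j < k ∧ π k < π j ∧ π j < π i) :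
    dispD π < 2 * invI π := by
  have := ThreeInvAux.main_aux (invI π) π (le_refl _) h
  omega
end
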